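/- arXiv:math/0511333 — 8 statements merged into one kernel-verified Lean document; each statement's English description precedes it below -/
import Mathlib

section
/- Let K be a field, let m, n be positive integers, let u, t ∈ K, let x = (x_1, …, x_m) ∈ K^m have pairwise distinct entries, and let y = (y_1, …, y_n) ∈ K^n satisfy t·x_i·y_j ≠ 1 for all 1 ≤ i ≤ m, 1 ≤ j ≤ n. If x_m·y_n = 1, then F(u; x, y; t) = F(u; (x_1, …, x_{m−1}), (y_1, …, y_{n−1}); t). -/
open Finset

/-- The bisymmetric function `F(u; x, y; t)` of Kirillov--Noumi. -/
noncomputable def bisymF {K : Type*} [Field K] {m n : ℕ} (u t : K)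
    (x : Fin m → K) (y : Fin n → K) : K :=
  ∑ I : Finset (Fin m),
    (-u) ^ I.card * t ^ (I.card.choose 2) *
      (∏ i ∈ I, ∏ j ∈ Iᶜ, (t * x i - x j) / (x i - x j)) *
      (∏ i ∈ I, ∏ j, (1 - x i * y j) / (1 - t * x i * y j))

lemma bisymF_key {K : Type*} [Field K] (a b c t : K) (hbc : b * c = 1)
    (hab : a ≠ b) (h1 : t * a * c ≠ 1) :
    (t * a - b) / (a - b) * ((1 - a * c) / (1 - t * a * c)) = 1 := by
  have hc : c ≠ 0 := by rintro rfl; simp at hbc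
  have h1' : (b - t * a) * c ≠ 0 := by
    rw [sub_mul, hbc]; intro hz; apply h1; linear_combination -hz
  have hab' : a - b ≠ 0 := sub_ne_zero.mpr hab
  have e1 : 1 - a * c = (b - a) * c := by rw [sub_mul, hbc]
  have e2 : 1 - t * a * c = (b - t * a) * c := by rw [sub_mul, hbc]
  rw [e1, e2, div_mul_div_comm, div_eq_one_iff_eq (by
    exact mul_ne_zero hab' h1')]
  ring


/-- Stability 1: if `x_m · y_n = 1` then `F(u;x,y;t) = F(u;x⁽ᵐ⁾,y⁽ⁿ⁾;t)`. -/
theorem bisymF_stability_one {K : Type*} [Field K] {m n : ℕ} (u t : K)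
    (x : Fin (m + 1) → K) (y : Fin (n + 1) → K)
    (hx : Function.Injective x)
    (hxy : ∀ (i : Fin (m + 1)) (j : Fin (n + 1)), t * x i * y j ≠ 1)
    (h : x (Fin.last m) * y (Fin.last n) = 1) :
    bisymF u t x y = bisymF u t (x ∘ Fin.castSucc) (y ∘ Fin.castSucc) := by
  classical
  set emb : Fin m ↪ Fin (m + 1) := ⟨Fin.castSucc, Fin.castSucc_injective m⟩ with hemb
  set f : Finset (Fin (m + 1)) → K := fun I =>
    (-u) ^ I.card * t ^ (I.card.choose 2) *
      (∏ i ∈ I, ∏ j ∈ Iᶜ, (t * x i - x j) / (x i - x j)) *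
      (∏ i ∈ I, ∏ j, (1 - x i * y j) / (1 - t * x i * y j)) with hf
  -- terms containing `last` vanish
  have h0 : ∀ I : Finset (Fin (m + 1)), Fin.last m ∈ I → f I = 0 := by
    intro I hI
    have : (∏ i ∈ I, ∏ j, (1 - x i * y j) / (1 - t * x i * y j)) = 0 := by
      apply Finset.prod_eq_zero hI
      apply Finset.prod_eq_zero (Finset.mem_univ (Fin.last n))
      rw [h]; simp
    rw [hf]; simp only [this, mul_zero]
  have himage : ∀ I : Finset (Fin (m + 1)), Fin.last m ∉ I →
      I ∈ (univ : Finset (Finset (Fin m))).image (fun J => J.map emb) := by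
    intro I hI
    refine Finset.mem_image.mpr ⟨I.preimage Fin.castSucc
      (Fin.castSucc_injective m).injOn, Finset.mem_univ _, ?_⟩
    ext a
    simp only [Finset.mem_map, Finset.mem_preimage, hemb, Function.Embedding.coeFn_mk]
    constructor
    · rintro ⟨b, hb, rfl⟩; exact hb
    · intro ha
      obtain ⟨b, rfl⟩ := Fin.exists_castSucc_eq.mpr (fun hla => hI (hla ▸ ha))
      exact ⟨b, ha, rfl⟩
  have step1 : bisymF u t x y = ∑ J : Finset (Fin m), f (J.map emb) := by
    rw [bisymF]
    rw [show (∑ I : Finset (Fin (m+1)),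
        (-u) ^ I.card * t ^ (I.card.choose 2) *
          (∏ i ∈ I, ∏ j ∈ Iᶜ, (t * x i - x j) / (x i - x j)) *
          (∏ i ∈ I, ∏ j, (1 - x i * y j) / (1 - t * x i * y j))) =
        ∑ I : Finset (Fin (m+1)), f I from rfl]
    rw [← Finset.sum_image (f := f)
      (g := fun J : Finset (Fin m) => J.map emb)
      (fun a _ b _ hab => Finset.map_injective emb hab)]
    apply (Finset.sum_subset (Finset.subset_univ _) ?_).symm
    intro I _ hI
    apply h0
    by_contra hlast
    exact hI (himage I hlast)
  rw [step1, bisymF]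
  apply Finset.sum_congr rfl
  intro J _
  -- complement identity
  have hcompl : (J.map emb)ᶜ = insert (Fin.last m) ((Jᶜ).map emb) := by
    ext a
    simp only [Finset.mem_compl, Finset.mem_map, Finset.mem_insert, hemb,
      Function.Embedding.coeFn_mk]
    rcases Fin.eq_castSucc_or_eq_last a with ⟨b, rfl⟩ | rfl
    · constructor
      · intro ha
        refine Or.inr ⟨b, ?_, rfl⟩
        intro hb; exact ha ⟨b, hb, rfl⟩
      · rintro (hl | ⟨c, hc, hcb⟩)
        · exact absurd hl (Fin.castSucc_lt_last b).ne
        · rintro ⟨d, hd, hdb⟩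
          exact hc (by rwa [show c = d from Fin.castSucc_injective m (hcb.trans hdb.symm)])
    · simp only [true_or, iff_true]
      rintro ⟨c, _, hc⟩
      exact (Fin.castSucc_lt_last c).ne hc
  have hlast_not : Fin.last m ∉ (Jᶜ).map emb := by
    simp only [Finset.mem_map, hemb, Function.Embedding.coeFn_mk]
    rintro ⟨c, _, hc⟩
    exact (Fin.castSucc_lt_last c).ne hc
  rw [hf]
  simp only [Finset.card_map, Function.comp]
  have e1 : (∏ i ∈ J.map emb, ∏ j ∈ (J.map emb)ᶜ, (t * x i - x j) / (x i - x j))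
      = (∏ i ∈ J, (t * x i.castSucc - x (Fin.last m)) / (x i.castSucc - x (Fin.last m))) *
        ∏ i ∈ J, ∏ j ∈ Jᶜ, (t * x i.castSucc - x j.castSucc) / (x i.castSucc - x j.castSucc) := by
    rw [Finset.prod_map, ← Finset.prod_mul_distrib]
    refine Finset.prod_congr rfl fun i _ => ?_
    rw [hcompl, Finset.prod_insert hlast_not, Finset.prod_map]
    rfl
  have e2 : (∏ i ∈ J.map emb, ∏ j : Fin (n + 1), (1 - x i * y j) / (1 - t * x i * y j))
      = (∏ i ∈ J, ∏ j : Fin n, (1 - x i.castSucc * y j.castSucc) / (1 - t * x i.castSucc * y j.castSucc)) *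
        ∏ i ∈ J, (1 - x i.castSucc * y (Fin.last n)) / (1 - t * x i.castSucc * y (Fin.last n)) := by
    rw [Finset.prod_map, ← Finset.prod_mul_distrib]
    refine Finset.prod_congr rfl fun i _ => ?_
    rw [Fin.prod_univ_castSucc]
    rfl
  have e3 : (∏ i ∈ J, (t * x i.castSucc - x (Fin.last m)) / (x i.castSucc - x (Fin.last m))) *
      ∏ i ∈ J, (1 - x i.castSucc * y (Fin.last n)) / (1 - t * x i.castSucc * y (Fin.last n)) = 1 := by
    rw [← Finset.prod_mul_distrib]
    refine Finset.prod_eq_one fun i _ => ?_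
    exact bisymF_key (x i.castSucc) (x (Fin.last m)) (y (Fin.last n)) t h
      (fun he => (Fin.castSucc_lt_last i).ne (hx he)) (hxy i.castSucc (Fin.last n))
  rw [e1, e2]
  linear_combination ((-u) ^ J.card * t ^ (J.card.choose 2) *
      (∏ i ∈ J, ∏ j ∈ Jᶜ, (t * x i.castSucc - x j.castSucc) / (x i.castSucc - x j.castSucc)) *
      ∏ i ∈ J, ∏ j : Fin n, (1 - x i.castSucc * y j.castSucc) / (1 - t * x i.castSucc * y j.castSucc)) * e3
end

section
/- Let K be a field, let m, n be positive integers, let u, t ∈ K, let x = (x_1, …, x_m) ∈ K^m have pairwise distinct entries, and let y = (y_1, …, y_n) ∈ K^n satisfy t·x_i·y_j ≠ 1 for all 1 ≤ i ≤ m, 1 ≤ j ≤ n. If x_m = 0 and y_n = 0, then F(u; x, y; t) = (1 − u) · F(u·t; (x_1, …, x_{m−1}), (y_1, …, y_{n−1}); t). -/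
open Finset

lemma last_not_mem_map {m : ℕ} (J : Finset (Fin m)) :
    Fin.last m ∉ J.map Fin.castSuccEmb := by
  simp only [Finset.mem_map, Fin.coe_castSuccEmb, not_exists]
  rintro a ⟨-, h⟩
  exact (Fin.castSucc_lt_last a).ne h

lemma mem_map_castSucc {m : ℕ} (J : Finset (Fin m)) (a : Fin m) :
    a.castSucc ∈ J.map Fin.castSuccEmb ↔ a ∈ J := by
  simp only [Finset.mem_map, Fin.coe_castSuccEmb]
  constructor
  · rintro ⟨b, hb, h⟩
    rwa [← Fin.castSucc_injective m h]
  · exact fun h => ⟨a, h, rfl⟩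

lemma pull_map {m : ℕ} (J : Finset (Fin m)) :
    (univ.filter (fun a : Fin m => a.castSucc ∈ J.map Fin.castSuccEmb)) = J := by
  ext a
  rw [Finset.mem_filter, mem_map_castSucc]
  simp

lemma map_pull {m : ℕ} (I : Finset (Fin (m+1))) :
    (univ.filter (fun a : Fin m => a.castSucc ∈ I)).map Fin.castSuccEmb
      = I.erase (Fin.last m) := by
  ext b
  induction b using Fin.lastCases with
  | last => exact iff_of_false (last_not_mem_map _) (by simp)
  | cast a =>
    rw [mem_map_castSucc, Finset.mem_filter, Finset.mem_erase]
    simp [(Fin.castSucc_lt_last a).ne]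

lemma compl_map {m : ℕ} (J : Finset (Fin m)) :
    (J.map Fin.castSuccEmb)ᶜ = insert (Fin.last m) (Jᶜ.map Fin.castSuccEmb) := by
  ext b
  induction b using Fin.lastCases with
  | last =>
    simp only [Finset.mem_compl, Finset.mem_insert]
    exact iff_of_true (last_not_mem_map J) (Or.inl trivial)
  | cast a =>
    simp only [Finset.mem_compl, Finset.mem_insert, mem_map_castSucc]
    simp [(Fin.castSucc_lt_last a).ne]

lemma compl_insert_map {m : ℕ} (J : Finset (Fin m)) :
    (insert (Fin.last m) (J.map Fin.castSuccEmb))ᶜ = Jᶜ.map Fin.castSuccEmb := by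
  rw [Finset.compl_insert, compl_map, Finset.erase_insert (last_not_mem_map Jᶜ)]

lemma sum_split {M : Type*} [AddCommMonoid M] {m : ℕ} (f : Finset (Fin (m+1)) → M) :
    ∑ I, f I = (∑ J : Finset (Fin m), f (J.map Fin.castSuccEmb)) +
      ∑ J : Finset (Fin m), f (insert (Fin.last m) (J.map Fin.castSuccEmb)) := by
  let e : Finset (Fin m) ⊕ Finset (Fin m) ≃ Finset (Fin (m+1)) :=
    { toFun := Sum.elim (fun J => J.map Fin.castSuccEmb)
        (fun J => insert (Fin.last m) (J.map Fin.castSuccEmb))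
      invFun := fun I =>
        if Fin.last m ∈ I then .inr (univ.filter (fun a : Fin m => a.castSucc ∈ I))
        else .inl (univ.filter (fun a : Fin m => a.castSucc ∈ I))
      left_inv := by
        rintro (J | J)
        · simp only [Sum.elim_inl, last_not_mem_map J, if_false]
          exact congrArg Sum.inl (pull_map J)
        · simp only [Sum.elim_inr, Finset.mem_insert_self, if_true]
          congr 1
          have h : ∀ a : Fin m,
              (a.castSucc ∈ insert (Fin.last m) (J.map Fin.castSuccEmb)) ↔
              a.castSucc ∈ J.map Fin.castSuccEmb := by
            intro a
            simp [Finset.mem_insert, (Fin.castSucc_lt_last a).ne]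
          simp only [h]
          rw [pull_map]
      right_inv := by
        intro I
        by_cases h : Fin.last m ∈ I
        · simp only [if_pos h, Sum.elim_inr, map_pull, Finset.insert_erase h]
        · simp only [if_neg h, Sum.elim_inl, map_pull, Finset.erase_eq_of_notMem h] }
  rw [← e.sum_comp f, Fintype.sum_sum_type]
  rfl

/-- Stability 2: if `x_m = y_n = 0` then `F(u;x,y;t) = (1-u)·F(ut;x⁽ᵐ⁾,y⁽ⁿ⁾;t)`. -/
theorem bisymF_stability_two {K : Type*} [Field K] {m n : ℕ} (u t : K)
    (x : Fin (m + 1) → K) (y : Fin (n + 1) → K)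
    (hx : Function.Injective x)
    (hxy : ∀ (i : Fin (m + 1)) (j : Fin (n + 1)), t * x i * y j ≠ 1)
    (hxm : x (Fin.last m) = 0) (hyn : y (Fin.last n) = 0) :
    bisymF u t x y =
      (1 - u) * bisymF (u * t) t (x ∘ Fin.castSucc) (y ∘ Fin.castSucc) := by
  have hx0 : ∀ i : Fin (m + 1), i ≠ Fin.last m → x i ≠ 0 := by
    intro i hi h
    exact hi (hx (h.trans hxm.symm))
  set f : Finset (Fin (m + 1)) → K := fun I =>
    (-u) ^ I.card * t ^ (I.card.choose 2) *
      (∏ i ∈ I, ∏ j ∈ Iᶜ, (t * x i - x j) / (x i - x j)) *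
      (∏ i ∈ I, ∏ j, (1 - x i * y j) / (1 - t * x i * y j)) with hf
  set g : Finset (Fin m) → K := fun J =>
    (-(u * t)) ^ J.card * t ^ (J.card.choose 2) *
      (∏ a ∈ J, ∏ b ∈ Jᶜ,
        (t * x a.castSucc - x b.castSucc) / (x a.castSucc - x b.castSucc)) *
      (∏ a ∈ J, ∏ j : Fin n,
        (1 - x a.castSucc * y j.castSucc) / (1 - t * x a.castSucc * y j.castSucc)) with hg
  have hyprod : ∀ i : Fin (m + 1),
      (∏ j : Fin (n + 1), (1 - x i * y j) / (1 - t * x i * y j))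
        = ∏ j : Fin n, (1 - x i * y j.castSucc) / (1 - t * x i * y j.castSucc) := by
    intro i
    rw [Fin.prod_univ_castSucc]
    simp [hyn]
  have claim1 : ∀ J : Finset (Fin m), f (J.map Fin.castSuccEmb) = g J := by
    intro J
    have e1 : (∏ i ∈ J.map Fin.castSuccEmb, ∏ j ∈ (J.map Fin.castSuccEmb)ᶜ,
          (t * x i - x j) / (x i - x j))
        = t ^ J.card * ∏ a ∈ J, ∏ b ∈ Jᶜ,
            (t * x a.castSucc - x b.castSucc) / (x a.castSucc - x b.castSucc) := by
      rw [compl_map]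
      simp only [Finset.prod_insert (last_not_mem_map Jᶜ), Finset.prod_map,
        Fin.coe_castSuccEmb]
      have hfac : ∀ a : Fin m,
          (t * x a.castSucc - x (Fin.last m)) / (x a.castSucc - x (Fin.last m)) = t := by
        intro a
        rw [hxm, sub_zero, sub_zero, mul_div_assoc,
          div_self (hx0 a.castSucc (Fin.castSucc_lt_last a).ne), mul_one]
      simp only [hfac]
      rw [Finset.prod_mul_distrib, Finset.prod_const]
    have e2 : (∏ i ∈ J.map Fin.castSuccEmb, ∏ j : Fin (n + 1),
          (1 - x i * y j) / (1 - t * x i * y j))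
        = ∏ a ∈ J, ∏ j : Fin n,
            (1 - x a.castSucc * y j.castSucc) / (1 - t * x a.castSucc * y j.castSucc) := by
      simp only [Finset.prod_map, Fin.coe_castSuccEmb]
      exact Finset.prod_congr rfl fun a _ => hyprod a.castSucc
    simp only [hf, hg, Finset.card_map, e1, e2]
    have hpow : (-(u * t)) ^ J.card = (-u) ^ J.card * t ^ J.card := by
      rw [← neg_mul, mul_pow]
    rw [hpow]
    ring
  have claim2 : ∀ J : Finset (Fin m),
      f (insert (Fin.last m) (J.map Fin.castSuccEmb)) = -u * g J := by
    intro J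
    have hcard : (insert (Fin.last m) (J.map Fin.castSuccEmb)).card = J.card + 1 := by
      rw [Finset.card_insert_of_notMem (last_not_mem_map J), Finset.card_map]
    have e1 : (∏ i ∈ insert (Fin.last m) (J.map Fin.castSuccEmb),
          ∏ j ∈ (insert (Fin.last m) (J.map Fin.castSuccEmb))ᶜ,
          (t * x i - x j) / (x i - x j))
        = ∏ a ∈ J, ∏ b ∈ Jᶜ,
            (t * x a.castSucc - x b.castSucc) / (x a.castSucc - x b.castSucc) := by
      rw [Finset.prod_insert (last_not_mem_map J), compl_insert_map]
      simp only [Finset.prod_map, Fin.coe_castSuccEmb]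
      have h1 : ∀ b : Fin m,
          (t * x (Fin.last m) - x b.castSucc) / (x (Fin.last m) - x b.castSucc) = 1 := by
        intro b
        rw [hxm, mul_zero, zero_sub,
          div_self (neg_ne_zero.2 (hx0 b.castSucc (Fin.castSucc_lt_last b).ne))]
      simp only [h1, Finset.prod_const_one, one_mul]
    have e2 : (∏ i ∈ insert (Fin.last m) (J.map Fin.castSuccEmb),
          ∏ j : Fin (n + 1), (1 - x i * y j) / (1 - t * x i * y j))
        = ∏ a ∈ J, ∏ j : Fin n,
            (1 - x a.castSucc * y j.castSucc) / (1 - t * x a.castSucc * y j.castSucc) := by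
      rw [Finset.prod_insert (last_not_mem_map J)]
      have h0 : (∏ j : Fin (n + 1),
          (1 - x (Fin.last m) * y j) / (1 - t * x (Fin.last m) * y j)) = 1 := by
        simp [hxm]
      rw [h0, one_mul]
      simp only [Finset.prod_map, Fin.coe_castSuccEmb]
      exact Finset.prod_congr rfl fun a _ => hyprod a.castSucc
    have hch : (J.card + 1).choose 2 = J.card + J.card.choose 2 := by
      rw [Nat.choose_succ_succ, Nat.choose_one_right]
    simp only [hf, hg, hcard, e1, e2, hch]
    have hpow : (-(u * t)) ^ J.card = (-u) ^ J.card * t ^ J.card := by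
      rw [← neg_mul, mul_pow]
    rw [hpow, pow_succ, pow_add]
    ring
  have hF : bisymF u t x y = ∑ I : Finset (Fin (m + 1)), f I := rfl
  have hG : bisymF (u * t) t (x ∘ Fin.castSucc) (y ∘ Fin.castSucc)
      = ∑ J : Finset (Fin m), g J := rfl
  rw [hF, hG, sum_split f]
  simp only [claim1, claim2]
  rw [← Finset.mul_sum]
  ring
end

section
/- Let K be a field, let m be a positive integer, let u, t ∈ K, and let x = (x_1, …, x_m) ∈ K^m have pairwise distinct entries with u·t^{m−1}·x_i ≠ 1 for all 1 ≤ i ≤ m. Then Σ_{I ⊆ {1,…,m}} (−u)^{|I|} · t^{binom(|I|,2)} · ∏_{i ∈ I, j ∈ {1,…,m}∖I} (t·x_i − x_j)/(x_i − x_j) · ∏_{i ∈ I} (1 − x_i)/(1 − u·t^{m−1}·x_i) = ∏_{i=1}^{m} (1 − u·t^{m−i})/(1 − u·t^{m−1}·x_i). -/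
open Finset Polynomial

section Aux

variable {K : Type*} [Field K] {ι : Type*} [DecidableEq ι]

/-- The summand of the cleared-denominator form of the identity. -/
def E1T (x : ι → K) (t u : K) (e : ℕ) (s I : Finset ι) : K :=
  (-u) ^ I.card * t ^ (I.card.choose 2) *
    (∏ i ∈ I, ∏ l ∈ s \ I, (t * x i - x l) / (x i - x l)) *
    ((∏ i ∈ I, (1 - x i)) * ∏ l ∈ s \ I, (1 - u * t ^ e * x l))

lemma sdiff_insert_insert {j : ι} {s' I : Finset ι} (hj : j ∉ s') (hI : I ⊆ s') :
    insert j s' \ insert j I = s' \ I := by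
  ext a
  simp only [mem_sdiff, mem_insert, not_or]
  constructor
  · rintro ⟨h1 | h1, h2, h3⟩
    · exact absurd h1 h2
    · exact ⟨h1, h3⟩
  · rintro ⟨h1, h2⟩
    exact ⟨Or.inr h1, fun e => hj (e ▸ h1), h2⟩

lemma choose_succ_two (k : ℕ) : (k + 1).choose 2 = k.choose 2 + k := by
  rw [show (2 : ℕ) = 1 + 1 from rfl, Nat.choose_succ_succ, Nat.choose_one_right, Nat.add_comm]

/-- Case A (`x j = 0`), term with `j ∉ I`. -/
lemma termA_not_mem {x : ι → K} {t u : K} {e : ℕ} {j : ι} {s' I : Finset ι}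
    (hj : j ∉ s') (hI : I ⊆ s') (hxj : x j = 0) (hxl : ∀ l ∈ s', x l ≠ 0) :
    E1T x t u (e + 1) (insert j s') I = E1T x t (u * t) e s' I := by
  have hjI : j ∉ I := fun h => hj (hI h)
  have hsd : insert j s' \ I = insert j (s' \ I) := insert_sdiff_of_notMem _ hjI
  have hjsd : j ∉ s' \ I := fun h => hj (mem_sdiff.mp h).1
  unfold E1T
  rw [hsd, prod_insert hjsd]
  have h1 : ∀ i ∈ I, ((t * x i - x j) / (x i - x j)) * ∏ l ∈ s' \ I, (t * x i - x l) / (x i - x l)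
      = t * ∏ l ∈ s' \ I, (t * x i - x l) / (x i - x l) := by
    intro i hi
    have hxi : x i ≠ 0 := hxl i (hI hi)
    rw [hxj]
    rw [show (t * x i - 0) / (x i - 0) = t from by field_simp; ring]
  have h2 : (∏ i ∈ I, ((t * x i - x j) / (x i - x j)) * ∏ l ∈ s' \ I, (t * x i - x l) / (x i - x l))
      = t ^ I.card * ∏ i ∈ I, ∏ l ∈ s' \ I, (t * x i - x l) / (x i - x l) := by
    rw [prod_congr rfl h1, prod_mul_distrib, prod_const]
  have h3 : ∀ i ∈ I, ∏ l ∈ insert j (s' \ I), (t * x i - x l) / (x i - x l)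
      = ((t * x i - x j) / (x i - x j)) * ∏ l ∈ s' \ I, (t * x i - x l) / (x i - x l) := by
    intro i hi
    rw [prod_insert hjsd]
  rw [prod_congr rfl h3, h2]
  have h4 : (1 - u * t ^ (e + 1) * x j) = 1 := by rw [hxj]; ring
  rw [h4]
  have h5 : ∏ l ∈ s' \ I, (1 - u * t ^ (e + 1) * x l) = ∏ l ∈ s' \ I, (1 - u * t * t ^ e * x l) :=
    prod_congr rfl fun l _ => by rw [pow_succ]; ring
  rw [h5]
  rw [show -(u * t) = -u * t from (neg_mul u t).symm, mul_pow]
  ring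

/-- Case A (`x j = 0`), term with `j ∈ I`. -/
lemma termA_mem {x : ι → K} {t u : K} {e : ℕ} {j : ι} {s' I : Finset ι}
    (hj : j ∉ s') (hI : I ⊆ s') (hxj : x j = 0) (hxl : ∀ l ∈ s', x l ≠ 0) :
    E1T x t u (e + 1) (insert j s') (insert j I) = (-u) * E1T x t (u * t) e s' I := by
  have hjI : j ∉ I := fun h => hj (hI h)
  have hsd : insert j s' \ insert j I = s' \ I := sdiff_insert_insert hj hI
  unfold E1T
  rw [hsd, card_insert_of_notMem hjI, prod_insert hjI, prod_insert hjI]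
  have h1 : ∏ l ∈ s' \ I, (t * x j - x l) / (x j - x l) = 1 := by
    refine prod_eq_one fun l hl => ?_
    have hxl' : x l ≠ 0 := hxl l (mem_sdiff.mp hl).1
    rw [hxj]
    field_simp
    ring
  rw [h1, hxj, choose_succ_two]
  have h5 : ∏ l ∈ s' \ I, (1 - u * t ^ (e + 1) * x l) = ∏ l ∈ s' \ I, (1 - u * t * t ^ e * x l) :=
    prod_congr rfl fun l _ => by rw [pow_succ]; ring
  rw [h5]
  rw [show -(u * t) = -u * t from (neg_mul u t).symm, mul_pow, pow_add, pow_succ]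
  ring

/-- Case C, term with `j ∉ I` vanishes at the pole value of `u`. -/
lemma termC_not_mem {x : ι → K} {t u : K} {e : ℕ} {j : ι} {s' I : Finset ι}
    (hj : j ∉ s') (hI : I ⊆ s') (h0 : 1 - u * t ^ (e + 1) * x j = 0) :
    E1T x t u (e + 1) (insert j s') I = 0 := by
  have hjI : j ∉ I := fun h => hj (hI h)
  have hjsd : j ∈ insert j s' \ I := mem_sdiff.mpr ⟨mem_insert_self _ _, hjI⟩
  unfold E1T
  rw [prod_eq_zero hjsd h0]
  ring

/-- Case C, term with `j ∈ I` at the pole value of `u`. -/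
lemma termC_mem {x : ι → K} {t : K} {e : ℕ} {j : ι} {s' I : Finset ι}
    (hj : j ∉ s') (hI : I ⊆ s') (ht : t ≠ 0) (hxj : x j ≠ 0)
    (hne : ∀ l ∈ s', x l ≠ x j) (hcard : s'.card = e + 1) :
    E1T x t ((t ^ (e + 1) * x j)⁻¹) (e + 1) (insert j s') (insert j I)
      = (1 - x j) * (-(x j)⁻¹) * E1T x t ((t ^ (e + 1) * x j)⁻¹) e s' I := by
  set u₀ : K := (t ^ (e + 1) * x j)⁻¹ with hu₀
  have hte : (t : K) ^ (e + 1) ≠ 0 := pow_ne_zero _ ht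
  have hjI : j ∉ I := fun h => hj (hI h)
  have hsd : insert j s' \ insert j I = s' \ I := sdiff_insert_insert hj hI
  have hu1 : u₀ * t ^ (e + 1) = (x j)⁻¹ := by
    rw [hu₀, mul_inv]
    field_simp
  have hu2 : u₀ * t ^ e = (t * x j)⁻¹ := by
    rw [hu₀, mul_inv, mul_inv]
    rw [show (t : K) ^ (e + 1) = t ^ e * t from by rw [pow_succ]]
    field_simp
  unfold E1T
  rw [hsd, card_insert_of_notMem hjI, prod_insert hjI, prod_insert hjI]
  -- per-factor combination
  have hfac : ∀ l ∈ s' \ I, ((t * x j - x l) / (x j - x l)) * (1 - u₀ * t ^ (e + 1) * x l)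
      = t * (1 - u₀ * t ^ e * x l) := by
    intro l hl
    have hxlj : x l ≠ x j := hne l (mem_sdiff.mp hl).1
    have hsub : x j - x l ≠ 0 := sub_ne_zero.mpr (Ne.symm hxlj)
    rw [hu1, hu2]
    field_simp
  have hkey : (∏ l ∈ s' \ I, (t * x j - x l) / (x j - x l)) *
      (∏ l ∈ s' \ I, (1 - u₀ * t ^ (e + 1) * x l))
      = t ^ (s' \ I).card * ∏ l ∈ s' \ I, (1 - u₀ * t ^ e * x l) := by
    rw [← prod_mul_distrib, ← prod_const, ← prod_mul_distrib]
    exact prod_congr rfl hfac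
  have hk : I.card ≤ e + 1 := hcard ▸ card_le_card hI
  have hcsd : (s' \ I).card = e + 1 - I.card := by rw [card_sdiff_of_subset hI, hcard]
  have hscal : (-u₀) ^ (I.card + 1) * t ^ ((I.card + 1).choose 2) * t ^ (e + 1 - I.card)
      = (-(x j)⁻¹) * ((-u₀) ^ I.card * t ^ (I.card.choose 2)) := by
    rw [choose_succ_two, pow_succ, pow_add]
    have : t ^ I.card * t ^ (e + 1 - I.card) = t ^ (e + 1) := by
      rw [← pow_add, Nat.add_sub_cancel' hk]
    calc (-u₀) ^ I.card * -u₀ * (t ^ I.card.choose 2 * t ^ I.card) * t ^ (e + 1 - I.card)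
        = (-(u₀ * t ^ (e + 1))) * ((-u₀) ^ I.card * t ^ I.card.choose 2) := by
          rw [← this]; ring
      _ = (-(x j)⁻¹) * ((-u₀) ^ I.card * t ^ (I.card.choose 2)) := by rw [hu1]
  calc (-u₀) ^ (I.card + 1) * t ^ ((I.card + 1).choose 2) *
        ((∏ l ∈ s' \ I, (t * x j - x l) / (x j - x l)) *
          ∏ i ∈ I, ∏ l ∈ s' \ I, (t * x i - x l) / (x i - x l)) *
        (((1 - x j) * ∏ i ∈ I, (1 - x i)) * ∏ l ∈ s' \ I, (1 - u₀ * t ^ (e + 1) * x l))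
      = ((-u₀) ^ (I.card + 1) * t ^ ((I.card + 1).choose 2)) *
        ((∏ l ∈ s' \ I, (t * x j - x l) / (x j - x l)) *
          (∏ l ∈ s' \ I, (1 - u₀ * t ^ (e + 1) * x l))) *
        (∏ i ∈ I, ∏ l ∈ s' \ I, (t * x i - x l) / (x i - x l)) *
        ((1 - x j) * ∏ i ∈ I, (1 - x i)) := by ring
    _ = ((-u₀) ^ (I.card + 1) * t ^ ((I.card + 1).choose 2) * t ^ (e + 1 - I.card)) *
        (∏ l ∈ s' \ I, (1 - u₀ * t ^ e * x l)) *
        (∏ i ∈ I, ∏ l ∈ s' \ I, (t * x i - x l) / (x i - x l)) *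
        ((1 - x j) * ∏ i ∈ I, (1 - x i)) := by rw [hkey, hcsd]; ring
    _ = (1 - x j) * (-(x j)⁻¹) *
        ((-u₀) ^ I.card * t ^ I.card.choose 2 *
          (∏ i ∈ I, ∏ l ∈ s' \ I, (t * x i - x l) / (x i - x l)) *
          ((∏ i ∈ I, (1 - x i)) * ∏ l ∈ s' \ I, (1 - u₀ * t ^ e * x l))) := by
          rw [hscal]; ring

end Aux

section KeyLemma

variable {K : Type*} [Field K] {ι : Type*} [DecidableEq ι]

/-- The key polynomial identity, proved by strong induction on the finite index set. -/
lemma E1key (s : Finset ι) : ∀ (x : ι → K) (t u : K), Set.InjOn x ↑s →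
    ∑ I ∈ s.powerset, E1T x t u (s.card - 1) s I = ∏ k ∈ range s.card, (1 - u * t ^ k) := by
  induction s using Finset.strongInduction with
  | _ s ih =>
    intro x t u hinj
    classical
    by_cases hs0 : s = ∅
    · subst hs0
      simp [E1T]
    by_cases hs1 : s.card = 1
    · obtain ⟨j, rfl⟩ := card_eq_one.mp hs1
      rw [show ({j} : Finset ι) = insert j ∅ from rfl, sum_powerset_insert (notMem_empty j)]
      simp [E1T]
      try ring
    -- now 2 ≤ s.card
    have hn2 : 2 ≤ s.card := by
      have h0 : s.card ≠ 0 := fun h => hs0 (card_eq_zero.mp h)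
      omega
    set n := s.card with hn
    by_cases hz : ∃ j ∈ s, x j = 0
    · -- Case A : some variable is zero
      obtain ⟨j, hjs, hxj⟩ := hz
      set s' := s.erase j with hs'
      have hjs' : j ∉ s' := notMem_erase _ _
      have hins : insert j s' = s := insert_erase hjs
      have hcard' : s'.card = n - 1 := by rw [hs', card_erase_of_mem hjs]
      have he : n - 2 + 1 = n - 1 := by omega
      have hxl : ∀ l ∈ s', x l ≠ 0 := by
        intro l hl h
        exact (ne_of_mem_erase hl) (hinj (mem_of_mem_erase hl) hjs (h.trans hxj.symm))
      have hinj' : Set.InjOn x ↑s' := hinj.mono (coe_subset.mpr (erase_subset j s))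
      have ihs := ih s' (erase_ssubset hjs) x t (u * t) hinj'
      rw [hcard'] at ihs
      rw [← hins, sum_powerset_insert hjs']
      have h1 : ∀ I ∈ s'.powerset, E1T x t u (n - 1) (insert j s') I
          = E1T x t (u * t) (n - 1 - 1) s' I := by
        intro I hI
        rw [show n - 1 = (n - 2) + 1 from he.symm, show n - 2 + 1 - 1 = n - 2 from by omega]
        exact termA_not_mem hjs' (mem_powerset.mp hI) hxj hxl
      have h2 : ∀ I ∈ s'.powerset, E1T x t u (n - 1) (insert j s') (insert j I)
          = (-u) * E1T x t (u * t) (n - 1 - 1) s' I := by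
        intro I hI
        rw [show n - 1 = (n - 2) + 1 from he.symm, show n - 2 + 1 - 1 = n - 2 from by omega]
        exact termA_mem hjs' (mem_powerset.mp hI) hxj hxl
      rw [sum_congr rfl h1, sum_congr rfl h2, ← mul_sum, ihs]
      rw [show n = (n - 1) + 1 from by omega, prod_range_succ']
      have : ∀ k ∈ range (n - 1), (1 - u * t ^ (k + 1)) = (1 - u * t * t ^ k) :=
        fun k _ => by rw [pow_succ]; ring
      rw [prod_congr rfl this]
      simp only [Nat.add_sub_cancel]
      ring
    · push_neg at hz
      by_cases ht : t = 0
      · -- Case B : t = 0, via Lagrange interpolation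
        subst ht
        -- only terms with |I| ≤ 1 survive
        have hvanish : ∀ I ∈ s.powerset, I ∉ insert (∅ : Finset ι) (s.image fun i => {i}) →
            E1T x 0 u (n - 1) s I = 0 := by
          intro I hIs hImem
          have hI2 : 2 ≤ I.card := by
            by_contra h
            rcases (by omega : I.card = 0 ∨ I.card = 1) with h0 | h1
            · exact hImem (card_eq_zero.mp h0 ▸ mem_insert_self _ _)
            · obtain ⟨a, rfl⟩ := card_eq_one.mp h1
              have ha : a ∈ s := singleton_subset_iff.mp (mem_powerset.mp hIs)
              exact hImem (mem_insert_of_mem (mem_image_of_mem _ ha))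
          have hcz : (0 : K) ^ (I.card.choose 2) = 0 :=
            zero_pow (by have := Nat.choose_pos hI2; omega)
          unfold E1T
          rw [hcz]
          ring
        have hTsub : insert (∅ : Finset ι) (s.image fun i => ({i} : Finset ι)) ⊆ s.powerset := by
          intro I hI
          rcases mem_insert.mp hI with h | h
          · exact h ▸ empty_mem_powerset s
          · obtain ⟨a, ha, rfl⟩ := mem_image.mp h
            exact mem_powerset.mpr (singleton_subset_iff.mpr ha)
        rw [← sum_subset hTsub (fun I hIs hIn => hvanish I hIs hIn)]
        have hnotmem : (∅ : Finset ι) ∉ s.image fun i => ({i} : Finset ι) := by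
          intro h
          obtain ⟨a, _, ha⟩ := mem_image.mp h
          exact (singleton_ne_empty a) ha
        rw [sum_insert hnotmem, sum_image (fun a _ b _ h => singleton_injective h)]
        have hzp : ((0 : K)) ^ (n - 1) = 0 := zero_pow (show n - 1 ≠ 0 by omega)
        have hE0 : E1T x 0 u (n - 1) s ∅ = 1 := by
          unfold E1T
          rw [hzp]
          simp
        have hE1 : ∀ i ∈ s, E1T x 0 u (n - 1) s {i}
            = (-u) * ((1 - x i) * ∏ l ∈ s \ {i}, (x i - x l)⁻¹ * (0 - x l)) := by
          intro i hi
          unfold E1T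
          rw [hzp]
          have h1 : ∀ l ∈ s \ {i}, (1 - u * (0:K) * x l) = 1 := fun l _ => by ring
          rw [prod_congr rfl h1, prod_const_one]
          have h2 : ∀ l ∈ s \ {i}, ((0:K) * x i - x l) / (x i - x l)
              = (x i - x l)⁻¹ * (0 - x l) := fun l _ => by
            rw [div_eq_mul_inv]; ring
          have h3 : ∏ i_1 ∈ ({i} : Finset ι), ∏ l ∈ s \ {i}, ((0:K) * x i_1 - x l) / (x i_1 - x l)
              = ∏ l ∈ s \ {i}, (x i - x l)⁻¹ * (0 - x l) := by
            rw [prod_singleton, prod_congr rfl h2]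
          rw [h3, prod_singleton]
          simp
          ring
        rw [hE0, sum_congr rfl hE1, ← mul_sum]
        -- Lagrange interpolation identity
        have hdeg : (1 - X : K[X]).degree < (s.card : WithBot ℕ) := by
          refine lt_of_le_of_lt (degree_sub_le _ _) ?_
          rw [degree_one, degree_X]
          have h1 : (1 : WithBot ℕ) < (s.card : WithBot ℕ) := by
            exact_mod_cast (show 1 < s.card by omega)
          simpa using h1
        have hinterp := Lagrange.eq_interpolate (v := x) hinj hdeg
        have hev := congrArg (Polynomial.eval 0) hinterp
        rw [Lagrange.interpolate_apply, Polynomial.eval_finset_sum] at hev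
        have hev' : (1 : K) = ∑ i ∈ s, (1 - x i) * ∏ l ∈ s \ {i}, (x i - x l)⁻¹ * (0 - x l) := by
          calc (1 : K) = Polynomial.eval 0 (1 - X : K[X]) := by simp
            _ = ∑ i ∈ s, Polynomial.eval 0 (C (Polynomial.eval (x i) (1 - X : K[X]))
                  * Lagrange.basis s x i) := hev
            _ = ∑ i ∈ s, (1 - x i) * ∏ l ∈ s \ {i}, (x i - x l)⁻¹ * (0 - x l) := by
                refine sum_congr rfl fun i hi => ?_
                rw [eval_mul, eval_C]
                congr 1
                · simp
                · rw [Lagrange.basis, eval_prod, ← erase_eq]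
                  refine prod_congr rfl fun l hl => ?_
                  rw [Lagrange.basisDivisor, eval_mul, eval_C, eval_sub, eval_X, eval_C]
        rw [← hev']
        -- right-hand side
        rw [show n = (n - 1) + 1 from by omega, prod_range_succ']
        have hr1 : ∀ k ∈ range (n - 1), (1 - u * (0:K) ^ (k + 1)) = 1 := fun k _ => by
          rw [zero_pow (Nat.succ_ne_zero k)]; ring
        rw [prod_congr rfl hr1, prod_const_one, pow_zero, one_mul, mul_one]
        ring
      · -- Case C : generic case, polynomial argument
        have hnz' : ∀ l ∈ s, x l ≠ 0 := hz
        set e := n - 2 with hedef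
        have he1 : e + 1 = n - 1 := by omega
        set p : K[X] := (∑ I ∈ s.powerset, C (t ^ (I.card.choose 2) *
            (∏ i ∈ I, ∏ l ∈ s \ I, (t * x i - x l) / (x i - x l)) * ∏ i ∈ I, (1 - x i)) *
            (-X) ^ I.card * ∏ l ∈ s \ I, (1 - C (t ^ (n - 1) * x l) * X)) -
            ∏ k ∈ range n, (1 - C (t ^ k) * X) with hpdef
        have heval : ∀ v : K, p.eval v
            = (∑ I ∈ s.powerset, E1T x t v (n - 1) s I) - ∏ k ∈ range n, (1 - v * t ^ k) := by
          intro v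
          rw [hpdef]
          simp only [eval_sub, eval_finset_sum, eval_mul, eval_prod, eval_pow, eval_neg,
            eval_X, eval_C, eval_one]
          congr 1
          · refine sum_congr rfl fun I hI => ?_
            unfold E1T
            have hf : ∏ l ∈ s \ I, (1 - t ^ (n - 1) * x l * v)
                = ∏ l ∈ s \ I, (1 - v * t ^ (n - 1) * x l) := prod_congr rfl fun l _ => by ring
            rw [hf]
            ring
          · exact prod_congr rfl fun k _ => by ring
        have hfacdeg : ∀ (a : K), (1 - C a * X : K[X]).natDegree ≤ 1 := fun a =>
          le_trans (natDegree_sub_le _ _) (max_le (by simp)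
            (le_trans (natDegree_C_mul_le _ _) natDegree_X_le))
        have hdeg : p.natDegree ≤ n := by
          rw [hpdef]
          refine le_trans (natDegree_sub_le _ _) (max_le ?_ ?_)
          · refine natDegree_sum_le_of_forall_le _ _ fun I hI => ?_
            have hIsub : I ⊆ s := mem_powerset.mp hI
            have hkn : I.card ≤ n := hn ▸ card_le_card hIsub
            have h1 : (C (t ^ (I.card.choose 2) *
                (∏ i ∈ I, ∏ l ∈ s \ I, (t * x i - x l) / (x i - x l)) * ∏ i ∈ I, (1 - x i))
                * (-X : K[X]) ^ I.card).natDegree ≤ I.card := by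
              refine le_trans (natDegree_C_mul_le _ _) ?_
              rw [natDegree_pow, natDegree_neg, natDegree_X, mul_one]
            have h2 : (∏ l ∈ s \ I, (1 - C (t ^ (n - 1) * x l) * X : K[X])).natDegree
                ≤ (s \ I).card := by
              refine le_trans (natDegree_prod_le _ _) ?_
              refine le_trans (sum_le_card_nsmul _ _ 1 fun l _ => hfacdeg _) ?_
              simp
            refine le_trans (natDegree_mul_le) (le_trans (add_le_add h1 h2) ?_)
            rw [card_sdiff_of_subset hIsub]
            omega
          · refine le_trans (natDegree_prod_le _ _) ?_
            refine le_trans (sum_le_card_nsmul _ _ 1 fun k _ => hfacdeg _) ?_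
            simp
        have hpole : ∀ j ∈ s, p.eval ((t ^ (n - 1) * x j)⁻¹) = 0 := by
          intro j hjs
          rw [heval, sub_eq_zero]
          set u₀ : K := (t ^ (n - 1) * x j)⁻¹ with hu₀def
          set s' := s.erase j with hs'def
          have hjs' : j ∉ s' := notMem_erase _ _
          have hins : insert j s' = s := insert_erase hjs
          have hcard' : s'.card = n - 1 := by rw [hs'def, card_erase_of_mem hjs]
          have hc'e : s'.card = e + 1 := by omega
          have hinj' : Set.InjOn x ↑s' := hinj.mono (coe_subset.mpr (erase_subset j s))
          have hne : ∀ l ∈ s', x l ≠ x j := fun l hl h =>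
            (ne_of_mem_erase hl) (hinj (mem_of_mem_erase hl) hjs h)
          have hxj : x j ≠ 0 := hnz' j hjs
          have hu₀' : u₀ = (t ^ (e + 1) * x j)⁻¹ := by rw [hu₀def, he1]
          have hte : (t : K) ^ (e + 1) ≠ 0 := pow_ne_zero _ ht
          have h0 : 1 - u₀ * t ^ (e + 1) * x j = 0 := by
            rw [hu₀', mul_inv]
            field_simp
            ring
          have ihs := ih s' (erase_ssubset hjs) x t u₀ hinj'
          rw [hc'e, Nat.add_sub_cancel] at ihs
          rw [← hins, sum_powerset_insert hjs']
          have hone : ∀ I ∈ s'.powerset, E1T x t u₀ (n - 1) (insert j s') I = 0 := by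
            intro I hI
            rw [← he1]
            exact termC_not_mem hjs' (mem_powerset.mp hI) h0
          have htwo : ∀ I ∈ s'.powerset, E1T x t u₀ (n - 1) (insert j s') (insert j I)
              = (1 - x j) * (-(x j)⁻¹) * E1T x t u₀ e s' I := by
            intro I hI
            rw [← he1, hu₀']
            exact termC_mem hjs' (mem_powerset.mp hI) ht hxj hne hc'e
          rw [sum_congr rfl hone, sum_congr rfl htwo, sum_const_zero, ← mul_sum, ihs]
          rw [show n = (e + 1) + 1 from by omega,
            show (∏ k ∈ range (e + 1 + 1), (1 - u₀ * t ^ k))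
              = (∏ k ∈ range (e + 1), (1 - u₀ * t ^ k)) * (1 - u₀ * t ^ (e + 1)) from
              prod_range_succ _ _]
          have hlast : 1 - u₀ * t ^ (e + 1) = 1 - (x j)⁻¹ := by
            rw [hu₀', mul_inv]
            field_simp
          rw [hlast]
          have hfin : (1 - x j) * (-(x j)⁻¹) = 1 - (x j)⁻¹ := by
            field_simp
            ring
          rw [hfin]
          ring
        have heval0 : p.eval 0 = 0 := by
          rw [heval, sub_eq_zero]
          rw [sum_eq_single_of_mem ∅ (empty_mem_powerset s)]
          · unfold E1T
            simp
          · intro I _ hne'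
            unfold E1T
            rw [neg_zero, zero_pow (fun h => hne' (card_eq_zero.mp h))]
            ring
        set pts : Finset K := insert 0 (s.image fun j => (t ^ (n - 1) * x j)⁻¹) with hpts
        have hpts0 : (0 : K) ∉ s.image fun j => (t ^ (n - 1) * x j)⁻¹ := by
          intro h
          obtain ⟨j, hj, hjeq⟩ := mem_image.mp h
          exact inv_ne_zero (mul_ne_zero (pow_ne_zero _ ht) (hnz' j hj)) hjeq
        have hptscard : pts.card = n + 1 := by
          rw [hpts, card_insert_of_notMem hpts0, card_image_of_injOn
            (fun a ha b hb hab => hinj ha hb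
              (mul_left_cancel₀ (pow_ne_zero _ ht) (inv_injective hab))), hn]
        have hroots : ∀ v ∈ pts, p.eval v = 0 := by
          intro v hv
          rcases mem_insert.mp hv with rfl | hv'
          · exact heval0
          · obtain ⟨j, hj, rfl⟩ := mem_image.mp hv'
            exact hpole j hj
        have hp0 : p = 0 :=
          eq_zero_of_natDegree_lt_card_of_eval_eq_zero' p pts hroots (by rw [hptscard]; omega)
        have hfinal := heval u
        rw [hp0, eval_zero] at hfinal
        exact sub_eq_zero.mp hfinal.symm

end KeyLemma

/-- Equation (E1b): a rational function summation identity. -/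
theorem sum_subsets_eq_prod {K : Type*} [Field K] {m : ℕ} (hm : 0 < m) (u t : K)
    (x : Fin m → K) (hx : Function.Injective x)
    (hux : ∀ i : Fin m, u * t ^ (m - 1) * x i ≠ 1) :
    (∑ I : Finset (Fin m),
      (-u) ^ I.card * t ^ (I.card.choose 2) *
        (∏ i ∈ I, ∏ j ∈ Iᶜ, (t * x i - x j) / (x i - x j)) *
        (∏ i ∈ I, (1 - x i) / (1 - u * t ^ (m - 1) * x i)))
    = ∏ i : Fin m, (1 - u * t ^ (m - 1 - i.val)) / (1 - u * t ^ (m - 1) * x i) := by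
  classical
  have hD : ∀ i : Fin m, (1 - u * t ^ (m - 1) * x i) ≠ 0 :=
    fun i => sub_ne_zero.mpr (Ne.symm (hux i))
  set D : K := ∏ i : Fin m, (1 - u * t ^ (m - 1) * x i) with hDdef
  have hDne : D ≠ 0 := prod_ne_zero_iff.mpr fun i _ => hD i
  have hkey := E1key (Finset.univ : Finset (Fin m)) x t u hx.injOn
  rw [card_univ, Fintype.card_fin] at hkey
  have hL : (∑ I : Finset (Fin m),
      (-u) ^ I.card * t ^ (I.card.choose 2) *
        (∏ i ∈ I, ∏ j ∈ Iᶜ, (t * x i - x j) / (x i - x j)) *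
        (∏ i ∈ I, (1 - x i) / (1 - u * t ^ (m - 1) * x i))) * D
      = ∑ I ∈ (Finset.univ : Finset (Fin m)).powerset, E1T x t u (m - 1) Finset.univ I := by
    rw [powerset_univ, sum_mul]
    refine sum_congr rfl fun I _ => ?_
    have hsplit : D = (∏ i ∈ I, (1 - u * t ^ (m - 1) * x i)) *
        ∏ i ∈ Iᶜ, (1 - u * t ^ (m - 1) * x i) := (prod_mul_prod_compl I _).symm
    have hBne : (∏ i ∈ I, (1 - u * t ^ (m - 1) * x i)) ≠ 0 :=
      prod_ne_zero_iff.mpr fun i _ => hD i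
    unfold E1T
    rw [show Finset.univ \ I = Iᶜ from (compl_eq_univ_sdiff I).symm]
    rw [prod_div_distrib, hsplit]
    have hc : (∏ i ∈ I, (1 - x i)) / (∏ i ∈ I, (1 - u * t ^ (m - 1) * x i)) *
        ((∏ i ∈ I, (1 - u * t ^ (m - 1) * x i)) * ∏ i ∈ Iᶜ, (1 - u * t ^ (m - 1) * x i))
        = (∏ i ∈ I, (1 - x i)) * ∏ i ∈ Iᶜ, (1 - u * t ^ (m - 1) * x i) := by
      rw [div_mul_eq_mul_div, mul_comm (∏ i ∈ I, (1 - u * t ^ (m - 1) * x i)), ← mul_assoc,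
        mul_div_assoc, div_self hBne, mul_one]
    linear_combination ((-u) ^ I.card * t ^ (I.card.choose 2) *
      ∏ i ∈ I, ∏ j ∈ Iᶜ, (t * x i - x j) / (x i - x j)) * hc
  have hR : (∏ i : Fin m, (1 - u * t ^ (m - 1 - i.val)) / (1 - u * t ^ (m - 1) * x i)) * D
      = ∏ k ∈ range m, (1 - u * t ^ k) := by
    rw [prod_div_distrib, ← hDdef, div_mul_cancel₀ _ hDne]
    rw [show (∏ i : Fin m, (1 - u * t ^ (m - 1 - i.val)))
        = ∏ k ∈ range m, (1 - u * t ^ (m - 1 - k)) from Fin.prod_univ_eq_prod_range (fun k => 1 - u * t ^ (m - 1 - k)) m]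
    exact prod_range_reflect (fun k => 1 - u * t ^ k) m
  exact mul_right_cancel₀ hDne (hL.trans (hkey.trans hR.symm))
end

section
/- Let K be a field, let m be a positive integer, let a ∈ K, let t ∈ K be nonzero, and let x = (x_1, …, x_m) ∈ K^m have pairwise distinct entries with a·x_i ≠ 1 for all 1 ≤ i ≤ m. Then Σ_{I ⊆ {1,…,m}} (−1)^{|I|} · t^{binom(|I|,2)} · ∏_{i ∈ I, j ∈ {1,…,m}∖I} (t·x_i − x_j)/(x_i − x_j) · ∏_{i ∈ I} (1 − x_i)/(1 − a·x_i) = t^{binom(m,2)} · x_1⋯x_m · ∏_{i=1}^{m} (1 − a·t^{1−i})/(1 − a·x_i). -/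
open Finset

private lemma prod_pairs_reindex {K : Type*} [CommMonoid K] {m : ℕ} (F : Fin m → Fin m → K) :
    ∏ p ∈ univ.filter (fun p : Fin m × Fin m => p.1 < p.2), F p.1 p.2
      = ∏ i, ∏ j ∈ Ioi i, F i j := by
  rw [prod_filter, ← univ_product_univ, prod_product]
  refine prod_congr rfl fun i _ => ?_
  rw [← prod_filter, filter_lt_eq_Ioi]

private lemma card_lt_pairs {m : ℕ} (I : Finset (Fin m)) :
    ((I ×ˢ I).filter fun p => p.1 < p.2).card = I.card.choose 2 := by
  have hswap : ((I ×ˢ I).filter fun p => p.1 < p.2).card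
      = ((I ×ˢ I).filter fun p => p.2 < p.1).card := by
    apply Finset.card_nbij Prod.swap
    · intro p hp
      simp only [mem_coe, mem_filter, mem_product] at hp ⊢
      exact ⟨⟨hp.1.2, hp.1.1⟩, hp.2⟩
    · intro p _ q _ h
      exact Prod.swap_injective h
    · intro p hp
      simp only [Set.mem_image, coe_filter, mem_coe, mem_product, Set.mem_setOf_eq] at hp ⊢
      exact ⟨p.swap, ⟨⟨hp.1.2, hp.1.1⟩, hp.2⟩, Prod.swap_swap p⟩
  have hdisj : Disjoint ((I ×ˢ I).filter fun p => p.1 < p.2)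
      ((I ×ˢ I).filter fun p => p.2 < p.1) := by
    refine Finset.disjoint_left.mpr fun p hp hp' => ?_
    simp only [mem_filter] at hp hp'
    exact absurd hp'.2 (not_lt.mpr hp.2.le)
  have hunion : ((I ×ˢ I).filter fun p => p.1 < p.2) ∪ ((I ×ˢ I).filter fun p => p.2 < p.1)
      = I.offDiag := by
    rw [← filter_or]
    ext p
    simp only [mem_filter, mem_product, mem_offDiag]
    rw [ne_iff_lt_or_gt]; tauto
  have h2 := congrArg Finset.card hunion
  rw [card_union_of_disjoint hdisj, offDiag_card, ← hswap] at h2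
  have h3 : I.card * I.card - I.card = I.card * (I.card - 1) := by
    rw [Nat.mul_sub_one, Nat.mul_comm]
  rw [h3] at h2
  have h4 := Nat.choose_two_right I.card
  omega


private lemma vand_split {K : Type*} [Field K] {m : ℕ} (t : K) (x : Fin m → K)
    (hx : Function.Injective x) (I : Finset (Fin m))
    (hcard : ((I ×ˢ I).filter fun p : Fin m × Fin m => p.1 < p.2).card = I.card.choose 2) :
    (∏ i, ∏ j ∈ Ioi i,
        ((if j ∈ I then t * x j else x j) - (if i ∈ I then t * x i else x i)))
      = t ^ (I.card.choose 2)
        * (∏ i ∈ I, ∏ j ∈ Iᶜ, (t * x i - x j) / (x i - x j))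
        * ∏ i, ∏ j ∈ Ioi i, (x j - x i) := by
  classical
  set ρ : Fin m → Fin m → K := fun i j => (t * x i - x j) / (x i - x j) with hρ
  set r : Fin m → Fin m → K := fun i j =>
    if i ∈ I then (if j ∈ I then t else ρ i j) else (if j ∈ I then ρ j i else 1) with hr
  have hsub : ∀ i j : Fin m, i ≠ j → x i - x j ≠ 0 := fun i j h =>
    sub_ne_zero.mpr (fun e => h (hx e))
  -- step 1 : factor each difference
  have hfac : ∀ i j : Fin m, i ≠ j →
      ((if j ∈ I then t * x j else x j) - (if i ∈ I then t * x i else x i))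
        = r i j * (x j - x i) := by
    intro i j hij
    have h1 := hsub i j hij
    have h2 := hsub j i (Ne.symm hij)
    simp only [hr, hρ]
    by_cases hi : i ∈ I <;> by_cases hj : j ∈ I <;>
        simp only [hi, hj, if_true, if_false, ite_true, ite_false, not_false_eq_true]
    · ring
    · rw [div_mul_eq_mul_div, eq_div_iff h1]; ring
    · exact (div_mul_cancel₀ _ h2).symm
    · exact (one_mul _).symm
  have hL : (∏ i, ∏ j ∈ Ioi i,
        ((if j ∈ I then t * x j else x j) - (if i ∈ I then t * x i else x i)))
      = (∏ i, ∏ j ∈ Ioi i, r i j) * ∏ i, ∏ j ∈ Ioi i, (x j - x i) := by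
    rw [← prod_mul_distrib]
    refine prod_congr rfl fun i _ => ?_
    rw [← prod_mul_distrib]
    refine prod_congr rfl fun j hj => hfac i j (mem_Ioi.mp hj).ne
  have key : (∏ i, ∏ j ∈ Ioi i, r i j)
      = t ^ (I.card.choose 2) * ∏ i ∈ I, ∏ j ∈ Iᶜ, (t * x i - x j) / (x i - x j) := by
    rw [← prod_pairs_reindex r]
    set P : Finset (Fin m × Fin m) := univ.filter (fun p : Fin m × Fin m => p.1 < p.2) with hP
    have hrsplit : ∀ p ∈ P, r p.1 p.2
        = (if p.1 ∈ I ∧ p.2 ∈ I then t else 1)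
          * ((if p.1 ∈ I ∧ p.2 ∉ I then ρ p.1 p.2 else 1)
            * (if p.1 ∉ I ∧ p.2 ∈ I then ρ p.2 p.1 else 1)) := by
      intro p _
      simp only [hr]
      by_cases hi : p.1 ∈ I <;> by_cases hj : p.2 ∈ I <;>
        simp [hi, hj]
    rw [prod_congr rfl hrsplit, prod_mul_distrib, prod_mul_distrib]
    have hA : (∏ p ∈ P, if p.1 ∈ I ∧ p.2 ∈ I then t else 1) = t ^ (I.card.choose 2) := by
      rw [← prod_filter, prod_const]
      congr 1
      rw [← hcard]
      congr 1
      ext p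
      simp only [hP, mem_filter, mem_univ, true_and, mem_product]
      tauto
    have hB : (∏ p ∈ P, if p.1 ∈ I ∧ p.2 ∉ I then ρ p.1 p.2 else 1)
        = ∏ p ∈ (I ×ˢ Iᶜ).filter (fun p : Fin m × Fin m => p.1 < p.2), ρ p.1 p.2 := by
      rw [← prod_filter]
      congr 1
      ext p
      simp only [hP, mem_filter, mem_univ, true_and, mem_product, mem_compl]
      tauto
    have hC : (∏ p ∈ P, if p.1 ∉ I ∧ p.2 ∈ I then ρ p.2 p.1 else 1)
        = ∏ p ∈ (I ×ˢ Iᶜ).filter (fun p : Fin m × Fin m => ¬ p.1 < p.2), ρ p.1 p.2 := by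
      rw [← prod_filter]
      refine (Finset.prod_nbij' Prod.swap Prod.swap ?_ ?_ ?_ ?_ ?_).symm
      · intro p hp
        simp only [hP, mem_filter, mem_univ, true_and, mem_product, mem_compl] at hp ⊢
        have hne : p.2 ≠ p.1 := fun e => hp.1.2 (e ▸ hp.1.1)
        exact ⟨lt_of_le_of_ne (not_lt.mp hp.2) hne, hp.1.2, hp.1.1⟩
      · intro p hp
        simp only [hP, mem_filter, mem_univ, true_and, mem_product, mem_compl] at hp ⊢
        exact ⟨⟨hp.2.2, hp.2.1⟩, not_lt.mpr hp.1.le⟩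
      · intro p _; exact Prod.swap_swap p
      · intro p _; exact Prod.swap_swap p
      · intro p _; rfl
    have hM : (∏ i ∈ I, ∏ j ∈ Iᶜ, (t * x i - x j) / (x i - x j))
        = (∏ p ∈ (I ×ˢ Iᶜ).filter (fun p : Fin m × Fin m => p.1 < p.2), ρ p.1 p.2)
          * ∏ p ∈ (I ×ˢ Iᶜ).filter (fun p : Fin m × Fin m => ¬ p.1 < p.2), ρ p.1 p.2 := by
      rw [prod_filter_mul_prod_filter_not]
      exact (prod_product I Iᶜ fun p => ρ p.1 p.2).symm
    rw [hA, hB, hC, ← hM]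
  rw [hL, key]

private lemma det_A_eq_sum {K : Type*} [Field K] {m : ℕ} (t : K) (x f : Fin m → K) :
    (Matrix.of fun i (k : Fin m) => x i ^ (k : ℕ) - f i * (t * x i) ^ (k : ℕ)).det
      = ∑ I : Finset (Fin m), (∏ i ∈ I, (-f i)) *
          ∏ i, ∏ j ∈ Ioi i,
            ((if j ∈ I then t * x j else x j) - (if i ∈ I then t * x i else x i)) := by
  classical
  set u : Fin m → Fin m → K := fun i k => (-f i) * (t * x i) ^ (k : ℕ) with hu
  set v : Fin m → Fin m → K := fun i k => x i ^ (k : ℕ) with hv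
  have hM : (fun i (k : Fin m) => x i ^ (k : ℕ) - f i * (t * x i) ^ (k : ℕ)) = u + v := by
    funext i k
    simp only [hu, hv, Pi.add_apply]
    ring
  have h0 : (Matrix.of fun i (k : Fin m) => x i ^ (k : ℕ) - f i * (t * x i) ^ (k : ℕ)).det
      = (Matrix.detRowAlternating (R := K) (n := Fin m)).toMultilinearMap (u + v) := by
    rw [← hM]; rfl
  rw [h0, MultilinearMap.map_add_univ]
  refine Finset.sum_congr rfl fun s _ => ?_
  have e : s.piecewise u v = fun i (k : Fin m) =>
      (if i ∈ s then -f i else 1) *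
        (Matrix.vandermonde fun j => if j ∈ s then t * x j else x j) i k := by
    funext i k
    by_cases hi : i ∈ s <;>
      simp [Finset.piecewise, hi, hu, hv, Matrix.vandermonde]
  rw [e]
  have h1 : (Matrix.detRowAlternating (R := K) (n := Fin m)).toMultilinearMap
        (fun i (k : Fin m) =>
          (if i ∈ s then -f i else 1) *
            (Matrix.vandermonde fun j => if j ∈ s then t * x j else x j) i k)
      = (Matrix.of fun i (k : Fin m) =>
          (if i ∈ s then -f i else 1) *
            (Matrix.vandermonde fun j => if j ∈ s then t * x j else x j) i k).det := rfl
  rw [h1, Matrix.det_mul_column, Matrix.det_vandermonde]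
  congr 1
  rw [prod_ite_mem univ s fun i => -f i, univ_inter]

private lemma det_B_eq {K : Type*} [Field K] {m : ℕ} (a t : K) (x : Fin m → K) :
    (Matrix.of fun i (k : Fin m) =>
        (t ^ (k : ℕ) - a) * x i ^ ((k : ℕ) + 1) + (1 - t ^ (k : ℕ)) * x i ^ (k : ℕ)).det
      = (∏ k : Fin m, (t ^ (k : ℕ) - a)) *
          ((∏ i, x i) * ∏ i, ∏ j ∈ Ioi i, (x j - x i)) := by
  classical
  set V' : Matrix (Fin m) (Fin m) K :=
    Matrix.of fun i j => x i * (Matrix.vandermonde x) i j with hV'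
  set T : Matrix (Fin m) (Fin m) K :=
    Matrix.of fun j k => if (j : ℕ) = (k : ℕ) then t ^ (k : ℕ) - a
      else if (j : ℕ) + 1 = (k : ℕ) then 1 - t ^ (k : ℕ) else 0 with hT
  have hBT : (Matrix.of fun i (k : Fin m) =>
      (t ^ (k : ℕ) - a) * x i ^ ((k : ℕ) + 1) + (1 - t ^ (k : ℕ)) * x i ^ (k : ℕ)) = V' * T := by
    ext i k
    rw [Matrix.mul_apply]
    simp only [Matrix.of_apply]
    have hTsplit : ∀ j : Fin m, T j k
        = (if j = k then t ^ (k : ℕ) - a else 0)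
          + (if (j : ℕ) + 1 = (k : ℕ) then 1 - t ^ (k : ℕ) else 0) := by
      intro j
      simp only [hT, Matrix.of_apply]
      by_cases h1 : (j : ℕ) = (k : ℕ)
      · have h2 : j = k := Fin.ext h1
        have h3 : ¬((j : ℕ) + 1 = (k : ℕ)) := by omega
        simp [h1, h2, h3]
      · have h2 : j ≠ k := fun e => h1 (congrArg Fin.val e)
        simp [h1, h2]
    simp only [hTsplit, mul_add]
    rw [Finset.sum_add_distrib]
    have hs1 : (∑ j : Fin m, V' i j * if j = k then t ^ (k : ℕ) - a else 0)
        = (t ^ (k : ℕ) - a) * x i ^ ((k : ℕ) + 1) := by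
      have h4 : ∀ j : Fin m, (V' i j * if j = k then t ^ (k : ℕ) - a else 0)
          = if j = k then V' i j * (t ^ (k : ℕ) - a) else 0 := fun j => by
        rw [mul_ite, mul_zero]
      simp only [h4]
      rw [Finset.sum_ite_eq' univ k fun j => V' i j * (t ^ (k : ℕ) - a)]
      simp only [mem_univ, if_true, hV', Matrix.of_apply, Matrix.vandermonde_apply]
      ring
    have hs2 : (∑ j : Fin m, V' i j * if (j : ℕ) + 1 = (k : ℕ) then 1 - t ^ (k : ℕ) else 0)
        = (1 - t ^ (k : ℕ)) * x i ^ (k : ℕ) := by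
      by_cases hk : (k : ℕ) = 0
      · rw [Finset.sum_eq_zero (fun j _ => by
          have : ¬((j : ℕ) + 1 = (k : ℕ)) := by omega
          simp [this])]
        simp [hk]
      · have hklt : (k : ℕ) - 1 < m := by omega
        rw [Finset.sum_eq_single (⟨(k : ℕ) - 1, hklt⟩ : Fin m)]
        · have hval : ((⟨(k : ℕ) - 1, hklt⟩ : Fin m) : ℕ) = (k : ℕ) - 1 := rfl
          have hcond : ((⟨(k : ℕ) - 1, hklt⟩ : Fin m) : ℕ) + 1 = (k : ℕ) := by
            rw [hval]; omega
          rw [if_pos hcond]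
          simp only [hV', Matrix.of_apply, Matrix.vandermonde_apply]
          have hxp : x i * x i ^ (((⟨(k : ℕ) - 1, hklt⟩ : Fin m) : ℕ)) = x i ^ (k : ℕ) := by
            rw [← pow_succ', hcond]
          rw [hxp, mul_comm]
        · intro j _ hj
          have : ¬((j : ℕ) + 1 = (k : ℕ)) := by
            intro h
            apply hj
            apply Fin.ext
            simp
            omega
          rw [if_neg this, mul_zero]
        · intro h
          exact absurd (mem_univ _) h
    rw [hs1, hs2]
  rw [hBT, Matrix.det_mul]
  have hdV : V'.det = (∏ i, x i) * ∏ i, ∏ j ∈ Ioi i, (x j - x i) := by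
    rw [hV', Matrix.det_mul_column, Matrix.det_vandermonde]
  have hdT : T.det = ∏ k : Fin m, (t ^ (k : ℕ) - a) := by
    rw [Matrix.det_of_upperTriangular]
    · refine Finset.prod_congr rfl fun k _ => ?_
      simp [hT]
    · intro i j hij
      have h1 : ¬((i : ℕ) = (j : ℕ)) := by
        have := hij
        simp only [id] at this
        omega
      have h2 : ¬((i : ℕ) + 1 = (j : ℕ)) := by
        have : (j : Fin m) < i := hij
        have := this
        omega
      simp [hT, h1, h2]
  rw [hdV, hdT]
  ring

/-- Equation (E2b): a rational function summation identity. -/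
theorem sum_subsets_eq_prod' {K : Type*} [Field K] {m : ℕ} (hm : 0 < m) (a t : K)
    (ht : t ≠ 0) (x : Fin m → K) (hx : Function.Injective x)
    (hax : ∀ i : Fin m, a * x i ≠ 1) :
    (∑ I : Finset (Fin m),
      (-1 : K) ^ I.card * t ^ (I.card.choose 2) *
        (∏ i ∈ I, ∏ j ∈ Iᶜ, (t * x i - x j) / (x i - x j)) *
        (∏ i ∈ I, (1 - x i) / (1 - a * x i)))
    = t ^ (m.choose 2) * (∏ i, x i) *
        ∏ i : Fin m, (1 - a * t ^ (-(i.val : ℤ))) / (1 - a * x i) := by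
  classical
  have hax' : ∀ i, (1 : K) - a * x i ≠ 0 := fun i => sub_ne_zero.mpr (Ne.symm (hax i))
  have hΔ : (∏ i, ∏ j ∈ Ioi i, (x j - x i)) ≠ 0 := by
    rw [Finset.prod_ne_zero_iff]
    intro i _
    rw [Finset.prod_ne_zero_iff]
    intro j hj
    exact sub_ne_zero.mpr fun e => (mem_Ioi.mp hj).ne' (hx e)
  have hPa : (∏ i, (1 - a * x i)) ≠ 0 := prod_ne_zero_iff.mpr fun i _ => hax' i
  have hL : (∑ I : Finset (Fin m),
        (-1 : K) ^ I.card * t ^ (I.card.choose 2) *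
          (∏ i ∈ I, ∏ j ∈ Iᶜ, (t * x i - x j) / (x i - x j)) *
          (∏ i ∈ I, (1 - x i) / (1 - a * x i))) * (∏ i, ∏ j ∈ Ioi i, (x j - x i))
      = (Matrix.of fun i (k : Fin m) =>
          x i ^ (k : ℕ) - ((1 - x i) / (1 - a * x i)) * (t * x i) ^ (k : ℕ)).det := by
    rw [det_A_eq_sum t x (fun i => (1 - x i) / (1 - a * x i)), Finset.sum_mul]
    refine Finset.sum_congr rfl fun I _ => ?_
    rw [vand_split t x hx I (card_lt_pairs I)]
    have hneg : (∏ i ∈ I, -((1 - x i) / (1 - a * x i)))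
        = (-1 : K) ^ I.card * ∏ i ∈ I, ((1 - x i) / (1 - a * x i)) := by
      rw [← prod_const, ← prod_mul_distrib]
      exact prod_congr rfl fun i _ => by ring
    rw [hneg]
    ring
  have hAB : (∏ i, (1 - a * x i)) * (Matrix.of fun i (k : Fin m) =>
        x i ^ (k : ℕ) - ((1 - x i) / (1 - a * x i)) * (t * x i) ^ (k : ℕ)).det
      = (Matrix.of fun i (k : Fin m) =>
          (t ^ (k : ℕ) - a) * x i ^ ((k : ℕ) + 1) + (1 - t ^ (k : ℕ)) * x i ^ (k : ℕ)).det := by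
    rw [← Matrix.det_mul_column (fun i => 1 - a * x i) (Matrix.of fun i (k : Fin m) =>
        x i ^ (k : ℕ) - ((1 - x i) / (1 - a * x i)) * (t * x i) ^ (k : ℕ))]
    congr 1
    ext i k
    simp only [Matrix.of_apply]
    have hfi : (1 - x i) / (1 - a * x i) * (1 - a * x i) = 1 - x i :=
      div_mul_cancel₀ _ (hax' i)
    rw [mul_pow]
    linear_combination (-(t ^ (k : ℕ)) * x i ^ (k : ℕ)) * hfi
  have hprod : t ^ (m.choose 2) * ∏ i : Fin m, (1 - a * t ^ (-(i.val : ℤ)))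
      = ∏ k : Fin m, (t ^ (k : ℕ) - a) := by
    have h2 : (∏ i : Fin m, t ^ (i : ℕ)) = t ^ (m.choose 2) := by
      rw [prod_pow_eq_pow_sum]
      congr 1
      rw [Fin.sum_univ_eq_sum_range (fun i => i) m, Finset.sum_range_id, Nat.choose_two_right]
    rw [← h2, ← prod_mul_distrib]
    refine prod_congr rfl fun i _ => ?_
    have hz : t ^ (i : ℕ) * t ^ (-(i.val : ℤ)) = 1 := by
      rw [← zpow_natCast t (i : ℕ), ← zpow_add₀ ht]
      simp
    calc t ^ (i : ℕ) * (1 - a * t ^ (-(i.val : ℤ)))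
        = t ^ (i : ℕ) - a * (t ^ (i : ℕ) * t ^ (-(i.val : ℤ))) := by ring
      _ = t ^ (i : ℕ) - a := by rw [hz, mul_one]
  have hR : (t ^ (m.choose 2) * (∏ i, x i) *
        ∏ i : Fin m, (1 - a * t ^ (-(i.val : ℤ))) / (1 - a * x i)) *
        (∏ i, ∏ j ∈ Ioi i, (x j - x i))
      = (Matrix.of fun i (k : Fin m) =>
          x i ^ (k : ℕ) - ((1 - x i) / (1 - a * x i)) * (t * x i) ^ (k : ℕ)).det := by
    have h1 : (t ^ (m.choose 2) * (∏ i, x i) *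
          ∏ i : Fin m, (1 - a * t ^ (-(i.val : ℤ))) / (1 - a * x i)) *
          (∏ i, ∏ j ∈ Ioi i, (x j - x i)) * (∏ i, (1 - a * x i))
        = (Matrix.of fun i (k : Fin m) =>
            x i ^ (k : ℕ) - ((1 - x i) / (1 - a * x i)) * (t * x i) ^ (k : ℕ)).det
            * (∏ i, (1 - a * x i)) := by
      rw [mul_comm ((Matrix.of fun i (k : Fin m) =>
            x i ^ (k : ℕ) - ((1 - x i) / (1 - a * x i)) * (t * x i) ^ (k : ℕ)).det),
        hAB, det_B_eq, ← hprod, prod_div_distrib, div_eq_mul_inv]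
      have hcc : (∏ i, (1 - a * x i)) * (∏ i, (1 - a * x i))⁻¹ = 1 := mul_inv_cancel₀ hPa
      linear_combination (t ^ (m.choose 2) * (∏ i : Fin m, (1 - a * t ^ (-(i.val : ℤ)))) *
        (∏ i, x i) * (∏ i, ∏ j ∈ Ioi i, (x j - x i))) * hcc
    exact mul_right_cancel₀ hPa h1
  exact mul_right_cancel₀ hΔ (hL.trans hR.symm)
end

section
/- Let K be a field, let m, n be integers with 1 ≤ m ≤ n, let t ∈ K be nonzero, let x = (x_1, …, x_m) ∈ K^m have pairwise distinct entries, let y = (y_1, …, y_n) ∈ K^n have pairwise distinct entries, and assume x_i ≠ t·y_j for all 1 ≤ i ≤ m, 1 ≤ j ≤ n. Then for every k with 1 ≤ k ≤ m, ω(x, y; t) = t^{m−n}·(1 − t) · Σ_{l=1}^{n} ω(x^{(k)}, y^{(l)}; t) · y_l/(x_k − t·y_l) · ∏_{1 ≤ i ≤ m, i ≠ k} (x_i − y_l)/(x_i − t·y_l) · ∏_{1 ≤ i ≤ n, i ≠ l} (y_i − t·y_l)/(y_i − y_l), where x^{(k)} is x with its k-th entry deleted and y^{(l)} is y with its l-th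 entry deleted. -/
open Finset

lemma pf_gen {K : Type*} [Field K] {ι : Type*} [DecidableEq ι] (S : Finset ι)
    (a c : ι → K) :
    Set.InjOn a S → ∀ z : K, (∀ j ∈ S, z ≠ a j) →
    ∏ j ∈ S, (z - c j) / (z - a j) =
      1 + ∑ j ∈ S, (a j - c j) / (z - a j) * ∏ i ∈ S.erase j, (a j - c i) / (a j - a i) := by
  induction S using Finset.induction_on with
  | empty => simp
  | @insert b S hb' ih =>
    intro ha z hz
    have haS : Set.InjOn a S := ha.mono (Finset.coe_subset.2 (Finset.subset_insert b S))
    have hzS : ∀ j ∈ S, z ≠ a j := fun j hj => hz j (Finset.mem_insert_of_mem hj)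
    have hzb : z ≠ a b := hz b (Finset.mem_insert_self b S)
    have hab : ∀ j ∈ S, a b ≠ a j := by
      intro j hj h
      exact hb' (by rwa [ha (Finset.mem_insert_self b S) (Finset.mem_insert_of_mem hj) h])
    set u := (a b - c b) / (z - a b) with hu
    have h2 : z - a b ≠ 0 := sub_ne_zero.2 hzb
    have hconst : (z - c b) / (z - a b) = 1 + u := by rw [hu]; field_simp; ring
    have hfb : (a b - c b) / (z - a b) * ∏ i ∈ (insert b S).erase b, (a b - c i) / (a b - a i)
        = u * (1 + ∑ j ∈ S, (a j - c j) / (a b - a j) * ∏ i ∈ S.erase j, (a j - c i) / (a j - a i)) := by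
      rw [Finset.erase_insert hb', ih haS (a b) hab, hu]
    have hsum : ∑ j ∈ S, (a j - c j) / (z - a j) * ∏ i ∈ (insert b S).erase j, (a j - c i) / (a j - a i)
        = ∑ j ∈ S, (a j - c j) / (z - a j) * ((a j - c b) / (a j - a b) * ∏ i ∈ S.erase j, (a j - c i) / (a j - a i)) := by
      refine Finset.sum_congr rfl fun j hj => ?_
      rw [Finset.erase_insert_of_ne (by rintro rfl; exact hb' hj),
        Finset.prod_insert (fun h => hb' (Finset.mem_of_mem_erase h))]
    rw [Finset.prod_insert hb', Finset.sum_insert hb', ih haS z hzS, hfb, hsum, hconst]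
    have key : ∀ j ∈ S,
        (1 + u) * ((a j - c j) / (z - a j) * ∏ i ∈ S.erase j, (a j - c i) / (a j - a i))
        = (a j - c j) / (z - a j) * ((a j - c b) / (a j - a b) * ∏ i ∈ S.erase j, (a j - c i) / (a j - a i))
          + u * ((a j - c j) / (a b - a j) * ∏ i ∈ S.erase j, (a j - c i) / (a j - a i)) := by
      intro j hj
      have h1 : z - a j ≠ 0 := sub_ne_zero.2 (hzS j hj)
      have h3 : a b - a j ≠ 0 := sub_ne_zero.2 (hab j hj)
      have h4 : a j - a b ≠ 0 := fun h => h3 (by linear_combination -h)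
      generalize (∏ i ∈ S.erase j, (a j - c i) / (a j - a i)) = P
      rw [hu]
      field_simp
      ring
    calc (1 + u) * (1 + ∑ j ∈ S, (a j - c j) / (z - a j) * ∏ i ∈ S.erase j, (a j - c i) / (a j - a i))
        = (1 + u) * 1 + ∑ j ∈ S, (1 + u) * ((a j - c j) / (z - a j) * ∏ i ∈ S.erase j, (a j - c i) / (a j - a i)) := by
          rw [mul_add, Finset.mul_sum]
      _ = (1 + u) + ∑ j ∈ S, ((a j - c j) / (z - a j) * ((a j - c b) / (a j - a b) * ∏ i ∈ S.erase j, (a j - c i) / (a j - a i))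
            + u * ((a j - c j) / (a b - a j) * ∏ i ∈ S.erase j, (a j - c i) / (a j - a i))) := by
          rw [mul_one]
          exact congrArg _ (Finset.sum_congr rfl key)
      _ = 1 + (u * (1 + ∑ j ∈ S, (a j - c j) / (a b - a j) * ∏ i ∈ S.erase j, (a j - c i) / (a j - a i))
            + ∑ j ∈ S, (a j - c j) / (z - a j) * ((a j - c b) / (a j - a b) * ∏ i ∈ S.erase j, (a j - c i) / (a j - a i))) := by
          rw [Finset.sum_add_distrib, mul_add, mul_one, Finset.mul_sum]
          ring

lemma pf_x {K : Type*} [Field K] {ι : Type*} [DecidableEq ι] (J : Finset ι) (x : ι → K)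
    (t : K) (ht : t ≠ 0) (hinj : Set.InjOn x J) (z : K) (hz : ∀ j ∈ J, z ≠ x j) :
    ∏ i ∈ J, (x i - t * z) / (x i - z) =
      t ^ J.card - (1 - t) * ∑ j ∈ J, x j / (z - x j) *
        ∏ i ∈ J.erase j, (x i - t * x j) / (x i - x j) := by
  have h1 : ∏ i ∈ J, (x i - t * z) / (x i - z)
      = t ^ J.card * ∏ i ∈ J, (z - x i / t) / (z - x i) := by
    rw [← Finset.prod_const (b := t), ← Finset.prod_mul_distrib]
    refine Finset.prod_congr rfl fun i hi => ?_
    have h : x i - z ≠ 0 := sub_ne_zero.2 fun h => hz i hi h.symm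
    have h' : z - x i ≠ 0 := sub_ne_zero.2 (hz i hi)
    field_simp
    ring
  rw [h1, pf_gen J x (fun i => x i / t) hinj z hz, mul_add, mul_one, Finset.mul_sum]
  have key : ∀ j ∈ J, t ^ J.card * ((x j - x j / t) / (z - x j) *
        ∏ i ∈ J.erase j, (x j - x i / t) / (x j - x i))
      = -((1 - t) * (x j / (z - x j) * ∏ i ∈ J.erase j, (x i - t * x j) / (x i - x j))) := by
    intro j hj
    have hcard : J.card = (J.erase j).card + 1 := (Finset.card_erase_add_one hj).symm
    have hprod : t ^ (J.erase j).card * ∏ i ∈ J.erase j, (x j - x i / t) / (x j - x i)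
        = ∏ i ∈ J.erase j, (x i - t * x j) / (x i - x j) := by
      rw [← Finset.prod_const (b := t), ← Finset.prod_mul_distrib]
      refine Finset.prod_congr rfl fun i hi => ?_
      have hne : x j ≠ x i := fun h => (Finset.ne_of_mem_erase hi)
        (hinj (Finset.mem_of_mem_erase hi) hj h.symm)
      have h : x j - x i ≠ 0 := sub_ne_zero.2 hne
      have h' : x i - x j ≠ 0 := sub_ne_zero.2 (Ne.symm hne)
      field_simp
      ring
    rw [hcard, pow_succ, mul_comm (t ^ (J.erase j).card) t, mul_assoc, mul_comm ((x j - x j / t) / (z - x j)),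
      ← mul_assoc (t ^ (J.erase j).card), hprod]
    have hzj : z - x j ≠ 0 := sub_ne_zero.2 (hz j hj)
    have : t * (x j - x j / t) = -((1 - t) * x j) := by field_simp; ring
    rw [show t * ((∏ i ∈ J.erase j, (x i - t * x j) / (x i - x j)) * ((x j - x j / t) / (z - x j)))
        = (t * (x j - x j / t)) / (z - x j) * ∏ i ∈ J.erase j, (x i - t * x j) / (x i - x j) by ring, this]
    ring
  rw [Finset.sum_congr rfl key]
  rw [Finset.sum_neg_distrib, ← Finset.mul_sum]
  ring

lemma erase_disjSum_inl {α β : Type*} [DecidableEq α] [DecidableEq β]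
    (s : Finset α) (t : Finset β) (a : α) :
    (s.disjSum t).erase (Sum.inl a) = (s.erase a).disjSum t := by
  ext x; cases x <;> simp [Finset.mem_erase, and_comm]

lemma erase_disjSum_inr {α β : Type*} [DecidableEq α] [DecidableEq β]
    (s : Finset α) (t : Finset β) (b : β) :
    (s.disjSum t).erase (Sum.inr b) = s.disjSum (t.erase b) := by
  ext x; cases x <;> simp [Finset.mem_erase, and_comm]

lemma pf_w {K : Type*} [Field K] {μ ν : Type*} [DecidableEq μ] [DecidableEq ν] [Fintype ν]
    (B : Finset μ) (x : μ → K) (y : ν → K) (t : K) (ht : t ≠ 0)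
    (hx : Set.InjOn x B) (hy : Function.Injective y)
    (hxy : ∀ i ∈ B, ∀ j, x i ≠ t * y j) (z : K)
    (hz1 : ∀ j ∈ B, z ≠ x j) (hz2 : ∀ l, z ≠ t * y l) :
    (∏ j ∈ B, (z - t * x j) / (z - x j)) * ∏ l, (z - y l) / (z - t * y l) =
      1 + (∑ j ∈ B, (1 - t) * x j * (∏ i ∈ B.erase j, (x j - t * x i) / (x j - x i)) *
            (∏ l, (x j - y l) / (x j - t * y l)) / (z - x j)
        + ∑ l, -((1 - t) * y l) * t ^ B.card * (t ^ (Fintype.card ν - 1))⁻¹ *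
            (∏ i ∈ B, (x i - y l) / (x i - t * y l)) *
            (∏ j ∈ Finset.univ.erase l, (y j - t * y l) / (y j - y l)) / (z - t * y l)) := by
  classical
  set a : μ ⊕ ν → K := Sum.elim x (fun l => t * y l) with ha_def
  set c : μ ⊕ ν → K := Sum.elim (fun j => t * x j) y with hc_def
  set S : Finset (μ ⊕ ν) := B.disjSum Finset.univ with hS_def
  have hinj : Set.InjOn a S := by
    rintro (i | i) hi (j | j) hj h
    · simp only [ha_def, Sum.elim_inl] at h
      rw [hx (by simpa [hS_def] using hi) (by simpa [hS_def] using hj) h]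
    · exact absurd h (hxy i (by simpa [hS_def] using hi) j)
    · exact absurd h.symm (hxy j (by simpa [hS_def] using hj) i)
    · simp only [ha_def, Sum.elim_inr] at h
      rw [hy (mul_left_cancel₀ ht h)]
  have hz : ∀ j ∈ S, z ≠ a j := by
    rintro (j | j) hj
    · exact hz1 j (by simpa [hS_def] using hj)
    · exact hz2 j
  have main := pf_gen S a c hinj z hz
  rw [hS_def] at main
  rw [Finset.prod_disjSum, Finset.sum_disjSum] at main
  simp only [ha_def, hc_def, Sum.elim_inl, Sum.elim_inr] at main
  rw [main]
  congr 1
  congr 1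
  · refine Finset.sum_congr rfl fun j hj => ?_
    rw [← hS_def, erase_disjSum_inl, Finset.prod_disjSum]
    simp only [ha_def, hc_def, Sum.elim_inl, Sum.elim_inr]
    ring
  · refine Finset.sum_congr rfl fun l _ => ?_
    rw [← hS_def, erase_disjSum_inr, Finset.prod_disjSum]
    simp only [ha_def, hc_def, Sum.elim_inl, Sum.elim_inr]
    have hA : ∏ i ∈ B, (t * y l - t * x i) / (t * y l - x i)
        = t ^ B.card * ∏ i ∈ B, (x i - y l) / (x i - t * y l) := by
      rw [← Finset.prod_const (b := t), ← Finset.prod_mul_distrib]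
      refine Finset.prod_congr rfl fun i hi => ?_
      have h1 : x i - t * y l ≠ 0 := sub_ne_zero.2 (hxy i hi l)
      have h2 : t * y l - x i ≠ 0 := fun h => h1 (by linear_combination -h)
      field_simp
      ring
    have hB : ∏ j ∈ Finset.univ.erase l, (t * y l - y j) / (t * y l - t * y j)
        = (t ^ (Fintype.card ν - 1))⁻¹ *
          ∏ j ∈ Finset.univ.erase l, (y j - t * y l) / (y j - y l) := by
      have hcard : Fintype.card ν - 1 = (Finset.univ.erase l).card := by
        rw [Finset.card_erase_of_mem (Finset.mem_univ l), Finset.card_univ]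
      rw [← inv_pow, hcard, ← Finset.prod_const (b := t⁻¹), ← Finset.prod_mul_distrib]
      refine Finset.prod_congr rfl fun j hj => ?_
      have hjl : y j ≠ y l := fun h => (Finset.ne_of_mem_erase hj) (hy h)
      have h1 : y l - y j ≠ 0 := sub_ne_zero.2 (Ne.symm hjl)
      have h2 : t * y l - t * y j ≠ 0 :=
        sub_ne_zero.2 fun h => (Finset.ne_of_mem_erase hj) (hy (mul_left_cancel₀ ht h.symm))
      have h3 : y j - y l ≠ 0 := sub_ne_zero.2 hjl
      field_simp
      ring
    rw [hA, hB]
    ring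

section Helpers
variable {N : ℕ}

/-- `{k}ᶜ` as image of `succAbove`. -/
lemma compl_singleton_eq_image (k : Fin (N + 1)) :
    ({k}ᶜ : Finset (Fin (N + 1))) = Finset.image k.succAbove Finset.univ := by
  ext j
  simp only [Finset.mem_compl, Finset.mem_singleton, Finset.mem_image, Finset.mem_univ, true_and]
  constructor
  · intro h; exact Fin.exists_succAbove_eq h
  · rintro ⟨i, rfl⟩; exact Fin.succAbove_ne k i

lemma prod_compl_singleton {M : Type*} [CommMonoid M] (k : Fin (N + 1)) (f : Fin (N + 1) → M) :
    ∏ i ∈ ({k}ᶜ : Finset (Fin (N + 1))), f i = ∏ i : Fin N, f (k.succAbove i) := by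
  rw [compl_singleton_eq_image, Finset.prod_image
    (fun a _ b _ h => Fin.succAbove_right_injective h)]

/-- complement of an image under succAbove. -/
lemma compl_image_succAbove (k : Fin (N + 1)) (D : Finset (Fin N)) :
    (Finset.image k.succAbove D)ᶜ = insert k (Finset.image k.succAbove Dᶜ) := by
  ext j
  simp only [Finset.mem_compl, Finset.mem_insert, Finset.mem_image, not_exists, not_and]
  constructor
  · intro h
    by_cases hj : j = k
    · exact Or.inl hj
    · obtain ⟨i, rfl⟩ := Fin.exists_succAbove_eq hj
      exact Or.inr ⟨i, fun hi => h i hi rfl, rfl⟩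
  · rintro (rfl | ⟨i, hi, rfl⟩) i2 hi2 h2
    · exact Fin.succAbove_ne j i2 h2
    · exact hi (by rwa [Fin.succAbove_right_injective (p := k) h2] at hi2)

lemma compl_insert_image_succAbove (k : Fin (N + 1)) (D : Finset (Fin N)) :
    (insert k (Finset.image k.succAbove D))ᶜ = Finset.image k.succAbove Dᶜ := by
  ext j
  simp only [Finset.mem_compl, Finset.mem_insert, Finset.mem_image, not_or, not_exists, not_and]
  constructor
  · rintro ⟨hjk, h⟩
    obtain ⟨i, rfl⟩ := Fin.exists_succAbove_eq hjk
    exact ⟨i, fun hi => h i hi rfl, rfl⟩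
  · rintro ⟨i, hi, rfl⟩
    refine ⟨Fin.succAbove_ne k i, fun i2 hi2 h2 => hi
      (by rwa [Fin.succAbove_right_injective (p := k) h2] at hi2)⟩

lemma sum_powerset_compl {M : Type*} [AddCommMonoid M] (k : Fin (N + 1))
    (g : Finset (Fin (N + 1)) → M) :
    ∑ J ∈ ({k}ᶜ : Finset (Fin (N + 1))).powerset, g J =
      ∑ D : Finset (Fin N), g (Finset.image k.succAbove D) := by
  refine (Finset.sum_bij (fun (D : Finset (Fin N)) (_ : D ∈ Finset.univ) =>
    Finset.image k.succAbove D) ?_ ?_ ?_ ?_).symm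
  · intro D _
    rw [Finset.mem_powerset, compl_singleton_eq_image]
    exact Finset.image_subset_image (Finset.subset_univ D)
  · intro a _ b _ h
    exact Finset.image_injective Fin.succAbove_right_injective h
  · intro J hJ
    rw [Finset.mem_powerset, compl_singleton_eq_image] at hJ
    refine ⟨J.preimage k.succAbove (Set.injOn_of_injective Fin.succAbove_right_injective),
      Finset.mem_univ _, ?_⟩
    show Finset.image k.succAbove _ = J
    rw [Finset.image_preimage]
    refine Finset.filter_true_of_mem fun j hj => ?_
    obtain ⟨i, _, hi⟩ := Finset.mem_image.1 (hJ hj)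
    exact ⟨i, hi⟩
  · intros; rfl

/-- Split a sum over all subsets of `Fin (N+1)` according to membership of `k`. -/
lemma sum_finset_split {M : Type*} [AddCommMonoid M] (k : Fin (N + 1))
    (f : Finset (Fin (N + 1)) → M) :
    ∑ I : Finset (Fin (N + 1)), f I =
      ∑ D : Finset (Fin N), (f (Finset.image k.succAbove D) +
        f (insert k (Finset.image k.succAbove D))) := by
  classical
  have h0 : ∑ I : Finset (Fin (N + 1)), f I = ∑ I ∈ Finset.univ.powerset, f I := by
    rw [Finset.powerset_univ]
  have huniv : (Finset.univ : Finset (Fin (N + 1))) = insert k ({k}ᶜ) := by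
    ext j; by_cases h : j = k <;> simp [h]
  have hknot : ∀ J ∈ ({k}ᶜ : Finset (Fin (N + 1))).powerset, k ∉ J := by
    intro J hJ hk
    exact (by simp : k ∉ ({k}ᶜ : Finset (Fin (N + 1)))) (Finset.mem_powerset.1 hJ hk)
  have hdisj : Disjoint (({k}ᶜ : Finset (Fin (N + 1))).powerset)
      ((({k}ᶜ : Finset (Fin (N + 1))).powerset).image (insert k)) := by
    rw [Finset.disjoint_right]
    intro J hJ hJ'
    obtain ⟨J', _, rfl⟩ := Finset.mem_image.1 hJ
    exact hknot _ hJ' (Finset.mem_insert_self k J')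
  have hins : ∀ x ∈ ({k}ᶜ : Finset (Fin (N + 1))).powerset,
      ∀ y ∈ ({k}ᶜ : Finset (Fin (N + 1))).powerset, insert k x = insert k y → x = y := by
    intro a ha b hb h
    rw [← Finset.erase_insert (hknot a ha), ← Finset.erase_insert (hknot b hb), h]
  rw [h0, huniv, Finset.powerset_insert, Finset.sum_union hdisj, Finset.sum_image hins,
    Finset.sum_add_distrib]
  congr 1
  · exact sum_powerset_compl k f
  · exact sum_powerset_compl k (fun J => f (insert k J))

lemma sum_insert_reindex {M : Type*} [AddCommMonoid M] {γ : Type*} [Fintype γ] [DecidableEq γ]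
    (f : Finset γ → γ → M) :
    ∑ D : Finset γ, ∑ j ∈ D, f D j = ∑ D : Finset γ, ∑ j ∈ Dᶜ, f (insert j D) j := by
  rw [Finset.sum_sigma' Finset.univ (fun D => D) (fun D j => f D j),
    Finset.sum_sigma' Finset.univ (fun D => Dᶜ) (fun D j => f (insert j D) j)]
  refine Finset.sum_bij' (fun p _ => (⟨p.1.erase p.2, p.2⟩ : Σ _ : Finset γ, γ))
    (fun p _ => (⟨insert p.2 p.1, p.2⟩ : Σ _ : Finset γ, γ)) ?_ ?_ ?_ ?_ ?_
  · intro p hp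
    simp only [Finset.mem_sigma, Finset.mem_univ, true_and] at hp ⊢
    simp [Finset.mem_compl]
  · intro p hp
    simp only [Finset.mem_sigma, Finset.mem_univ, true_and] at hp ⊢
    exact Finset.mem_insert_self _ _
  · intro p hp
    simp only [Finset.mem_sigma, Finset.mem_univ, true_and] at hp
    exact Sigma.ext (by simp [Finset.insert_erase hp]) (by simp)
  · intro p hp
    simp only [Finset.mem_sigma, Finset.mem_univ, true_and] at hp
    exact Sigma.ext (by simp [Finset.erase_insert (Finset.mem_compl.1 hp)]) (by simp)
  · intro p hp
    simp only [Finset.mem_sigma, Finset.mem_univ, true_and] at hp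
    simp only []
    rw [Finset.insert_erase hp]

end Helpers

/-- The bisymmetric function `ω(x, y; t)`. -/
noncomputable def bisymOmega {K : Type*} [Field K] {m n : ℕ} (t : K)
    (x : Fin m → K) (y : Fin n → K) : K :=
  ∑ I : Finset (Fin m),
    (-1 : K) ^ I.card * t ^ (I.card.choose 2) *
      (∏ i ∈ I, ∏ j ∈ Iᶜ, (x i - t * x j) / (x i - x j)) *
      (∏ i ∈ I, ∏ j, (x i - y j) / (x i - t * y j))

noncomputable section MainAux
variable {K : Type*} [Field K]

/-- x-interaction factor. -/
def auxX {m : ℕ} (t : K) (x' : Fin m → K) (D : Finset (Fin m)) : K :=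
  ∏ i ∈ D, ∏ j ∈ Dᶜ, (x' i - t * x' j) / (x' i - x' j)

def auxF {m n : ℕ} (t : K) (x' : Fin m → K) (y : Fin n → K) (i : Fin m) : K :=
  ∏ j, (x' i - y j) / (x' i - t * y j)

def auxG {m n : ℕ} (t : K) (x' : Fin m → K) (y : Fin n → K) (D : Finset (Fin m)) : K :=
  (-1 : K) ^ D.card * t ^ (D.card.choose 2) * auxX t x' D * ∏ i ∈ D, auxF t x' y i

lemma not_mem_image_succAbove {N : ℕ} (k : Fin (N + 1)) (S : Finset (Fin N)) :
    k ∉ Finset.image k.succAbove S := by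
  intro h
  obtain ⟨i, _, hi⟩ := Finset.mem_image.1 h
  exact Fin.succAbove_ne k i hi

lemma prod_image_succAbove {N : ℕ} {M : Type*} [CommMonoid M] (k : Fin (N + 1))
    (S : Finset (Fin N)) (g : Fin (N + 1) → M) :
    ∏ i ∈ Finset.image k.succAbove S, g i = ∏ i ∈ S, g (k.succAbove i) :=
  Finset.prod_image (fun a _ b _ h => Fin.succAbove_right_injective h)

lemma stepL {m n : ℕ} (t : K) (x : Fin (m + 1) → K) (y : Fin (n + 1) → K)
    (k : Fin (m + 1)) :
    bisymOmega t x y = ∑ D : Finset (Fin m),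
      (auxG t (x ∘ k.succAbove) y D *
          (∏ i ∈ D, (x (k.succAbove i) - t * x k) / (x (k.succAbove i) - x k))
        - auxG t (x ∘ k.succAbove) y D *
          (t ^ D.card * (∏ j, (x k - y j) / (x k - t * y j)) *
            ∏ j ∈ Dᶜ, (x k - t * x (k.succAbove j)) / (x k - x (k.succAbove j)))) := by
  rw [bisymOmega, sum_finset_split k]
  refine Finset.sum_congr rfl fun D _ => ?_
  have hcard : (Finset.image k.succAbove D).card = D.card :=
    Finset.card_image_of_injective _ Fin.succAbove_right_injective
  have part1 : (-1 : K) ^ (Finset.image k.succAbove D).card *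
        t ^ ((Finset.image k.succAbove D).card.choose 2) *
        (∏ i ∈ Finset.image k.succAbove D, ∏ j ∈ (Finset.image k.succAbove D)ᶜ,
          (x i - t * x j) / (x i - x j)) *
        (∏ i ∈ Finset.image k.succAbove D, ∏ j, (x i - y j) / (x i - t * y j))
      = auxG t (x ∘ k.succAbove) y D *
          ∏ i ∈ D, (x (k.succAbove i) - t * x k) / (x (k.succAbove i) - x k) := by
    rw [hcard, prod_image_succAbove, prod_image_succAbove]
    have e1 : ∀ i ∈ D, ∏ j ∈ (Finset.image k.succAbove D)ᶜ,
        (x (k.succAbove i) - t * x j) / (x (k.succAbove i) - x j)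
        = ((x (k.succAbove i) - t * x k) / (x (k.succAbove i) - x k)) *
          ∏ j ∈ Dᶜ, (x (k.succAbove i) - t * x (k.succAbove j)) /
            (x (k.succAbove i) - x (k.succAbove j)) := by
      intro i _
      rw [compl_image_succAbove, Finset.prod_insert (not_mem_image_succAbove k Dᶜ),
        prod_image_succAbove]
    rw [Finset.prod_congr rfl e1, Finset.prod_mul_distrib]
    simp only [auxG, auxX, auxF, Function.comp]
    ring
  have part2 : (-1 : K) ^ (insert k (Finset.image k.succAbove D)).card *
        t ^ ((insert k (Finset.image k.succAbove D)).card.choose 2) *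
        (∏ i ∈ insert k (Finset.image k.succAbove D),
          ∏ j ∈ (insert k (Finset.image k.succAbove D))ᶜ, (x i - t * x j) / (x i - x j)) *
        (∏ i ∈ insert k (Finset.image k.succAbove D), ∏ j, (x i - y j) / (x i - t * y j))
      = -(auxG t (x ∘ k.succAbove) y D *
          (t ^ D.card * (∏ j, (x k - y j) / (x k - t * y j)) *
            ∏ j ∈ Dᶜ, (x k - t * x (k.succAbove j)) / (x k - x (k.succAbove j)))) := by
    rw [Finset.card_insert_of_notMem (not_mem_image_succAbove k D), hcard,
      compl_insert_image_succAbove,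
      Finset.prod_insert (not_mem_image_succAbove k D),
      Finset.prod_insert (not_mem_image_succAbove k D),
      prod_image_succAbove, prod_image_succAbove]
    have hprod : ∀ i ∈ D, ∏ j ∈ Finset.image k.succAbove Dᶜ,
        (x (k.succAbove i) - t * x j) / (x (k.succAbove i) - x j)
        = ∏ j ∈ Dᶜ, (x (k.succAbove i) - t * x (k.succAbove j)) /
            (x (k.succAbove i) - x (k.succAbove j)) := fun i _ => prod_image_succAbove k Dᶜ _
    rw [Finset.prod_congr rfl hprod, prod_image_succAbove]
    have hch : (D.card + 1).choose 2 = D.card.choose 2 + D.card := by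
      rw [Nat.choose_succ_succ, Nat.choose_one_right, Nat.add_comm]
    rw [hch, pow_succ, pow_add]
    simp only [auxG, auxX, auxF, Function.comp]
    ring
  rw [part1, part2]
  ring

lemma stepW {m n : ℕ} (t : K) (ht : t ≠ 0) (x : Fin (m + 1) → K) (y : Fin (n + 1) → K)
    (hx : Function.Injective x) (hy : Function.Injective y)
    (hxy : ∀ i j, x i ≠ t * y j) (k : Fin (m + 1)) (D : Finset (Fin m)) :
    t ^ ((m : ℤ) - (n : ℤ)) * (1 - t) *
      ∑ l, y l / (x k - t * y l) *
        ((∏ i ∈ Dᶜ, (x (k.succAbove i) - y l) / (x (k.succAbove i) - t * y l)) *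
          ∏ i ∈ ({l}ᶜ : Finset (Fin (n + 1))), (y i - t * y l) / (y i - y l))
    = t ^ D.card * (1 -
        (∏ j, (x k - y j) / (x k - t * y j)) *
          (∏ j ∈ Dᶜ, (x k - t * x (k.succAbove j)) / (x k - x (k.succAbove j)))
      + ∑ j ∈ Dᶜ, (1 - t) * x (k.succAbove j) *
          (∏ i ∈ Dᶜ.erase j, (x (k.succAbove j) - t * x (k.succAbove i)) /
            (x (k.succAbove j) - x (k.succAbove i))) *
          (∏ l, (x (k.succAbove j) - y l) / (x (k.succAbove j) - t * y l)) /
          (x k - x (k.succAbove j))) := by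
  have hxB : Set.InjOn (fun i => x (k.succAbove i)) ↑(Dᶜ : Finset (Fin m)) := by
    intro a _ b _ h
    exact Fin.succAbove_right_injective (hx h)
  have hxyB : ∀ i ∈ (Dᶜ : Finset (Fin m)), ∀ j, (fun i => x (k.succAbove i)) i ≠ t * y j :=
    fun i _ j => hxy (k.succAbove i) j
  have hz1 : ∀ j ∈ (Dᶜ : Finset (Fin m)), x k ≠ (fun i => x (k.succAbove i)) j := by
    intro j _ h
    exact Fin.succAbove_ne k j (hx h.symm)
  have hz2 : ∀ l, x k ≠ t * y l := fun l => hxy k l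
  have hw := pf_w (Dᶜ : Finset (Fin m)) (fun i => x (k.succAbove i)) y t ht hxB hy hxyB
    (x k) hz1 hz2
  simp only [Fintype.card_fin, Nat.add_sub_cancel] at hw
  have hpow : (t : K) ^ ((m : ℤ) - (n : ℤ)) = t ^ D.card * t ^ (Dᶜ : Finset (Fin m)).card * (t ^ n)⁻¹ := by
    have hqb : D.card + (Dᶜ : Finset (Fin m)).card = m := by
      rw [Finset.card_add_card_compl]
      simp
    rw [zpow_sub₀ ht, zpow_natCast, zpow_natCast, div_eq_mul_inv, ← pow_add, hqb]
  have hsum : t ^ ((m : ℤ) - (n : ℤ)) * (1 - t) *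
      ∑ l, y l / (x k - t * y l) *
        ((∏ i ∈ Dᶜ, (x (k.succAbove i) - y l) / (x (k.succAbove i) - t * y l)) *
          ∏ i ∈ ({l}ᶜ : Finset (Fin (n + 1))), (y i - t * y l) / (y i - y l))
      = -(t ^ D.card * ∑ l, -((1 - t) * y l) * t ^ (Dᶜ : Finset (Fin m)).card * ((t:K) ^ n)⁻¹ *
          (∏ i ∈ Dᶜ, ((fun i => x (k.succAbove i)) i - y l) / ((fun i => x (k.succAbove i)) i - t * y l)) *
          (∏ j ∈ Finset.univ.erase l, (y j - t * y l) / (y j - y l)) / (x k - t * y l)) := by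
    rw [Finset.mul_sum, Finset.mul_sum, ← Finset.sum_neg_distrib]
    refine Finset.sum_congr rfl fun l _ => ?_
    rw [hpow, compl_singleton]
    ring
  rw [hsum]
  simp only [] at hw ⊢
  linear_combination (t ^ D.card) * hw


lemma stepR0 {m n : ℕ} (t : K) (x : Fin (m + 1) → K) (y : Fin (n + 1) → K)
    (k : Fin (m + 1)) (l : Fin (n + 1)) :
    bisymOmega t (x ∘ k.succAbove) (y ∘ l.succAbove)
      = ∑ D : Finset (Fin m), (-1 : K) ^ D.card * t ^ (D.card.choose 2) *
          auxX t (x ∘ k.succAbove) D *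
          ∏ i ∈ D, ∏ j ∈ ({l}ᶜ : Finset (Fin (n + 1))),
            (x (k.succAbove i) - y j) / (x (k.succAbove i) - t * y j) := by
  rw [bisymOmega]
  refine Finset.sum_congr rfl fun D _ => ?_
  simp only [auxX, Function.comp_apply]
  congr 1
  refine Finset.prod_congr rfl fun i _ => ?_
  rw [prod_compl_singleton]

lemma stepR {m n : ℕ} (t : K) (ht : t ≠ 0) (x : Fin (m + 1) → K) (y : Fin (n + 1) → K)
    (hx : Function.Injective x) (hy : Function.Injective y)
    (hxy : ∀ i j, x i ≠ t * y j) (k : Fin (m + 1)) :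
    t ^ ((m : ℤ) - (n : ℤ)) * (1 - t) *
        ∑ l : Fin (n + 1),
          bisymOmega t (x ∘ k.succAbove) (y ∘ l.succAbove) *
            (y l / (x k - t * y l)) *
            (∏ i ∈ ({k}ᶜ : Finset (Fin (m + 1))), (x i - y l) / (x i - t * y l)) *
            (∏ i ∈ ({l}ᶜ : Finset (Fin (n + 1))), (y i - t * y l) / (y i - y l))
      = ∑ D : Finset (Fin m), auxG t (x ∘ k.succAbove) y D *
          (t ^ D.card * (1 -
            (∏ j, (x k - y j) / (x k - t * y j)) *
              (∏ j ∈ Dᶜ, (x k - t * x (k.succAbove j)) / (x k - x (k.succAbove j)))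
          + ∑ j ∈ Dᶜ, (1 - t) * x (k.succAbove j) *
              (∏ i ∈ Dᶜ.erase j, (x (k.succAbove j) - t * x (k.succAbove i)) /
                (x (k.succAbove j) - x (k.succAbove i))) *
              (∏ l, (x (k.succAbove j) - y l) / (x (k.succAbove j) - t * y l)) /
              (x k - x (k.succAbove j)))) := by
  have hstep1 : ∀ l : Fin (n + 1),
      bisymOmega t (x ∘ k.succAbove) (y ∘ l.succAbove) *
        (y l / (x k - t * y l)) *
        (∏ i ∈ ({k}ᶜ : Finset (Fin (m + 1))), (x i - y l) / (x i - t * y l)) *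
        (∏ i ∈ ({l}ᶜ : Finset (Fin (n + 1))), (y i - t * y l) / (y i - y l))
      = ∑ D : Finset (Fin m), auxG t (x ∘ k.succAbove) y D *
          (y l / (x k - t * y l) *
            ((∏ i ∈ Dᶜ, (x (k.succAbove i) - y l) / (x (k.succAbove i) - t * y l)) *
              ∏ i ∈ ({l}ᶜ : Finset (Fin (n + 1))), (y i - t * y l) / (y i - y l))) := by
    intro l
    rw [stepR0, prod_compl_singleton k (fun i => (x i - y l) / (x i - t * y l)),
      Finset.sum_mul, Finset.sum_mul, Finset.sum_mul]
    refine Finset.sum_congr rfl fun D _ => ?_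
    -- key product manipulation
    have hsplit : (∏ i : Fin m, (x (k.succAbove i) - y l) / (x (k.succAbove i) - t * y l))
        = (∏ i ∈ D, (x (k.succAbove i) - y l) / (x (k.succAbove i) - t * y l)) *
          ∏ i ∈ Dᶜ, (x (k.succAbove i) - y l) / (x (k.succAbove i) - t * y l) :=
      (Finset.prod_mul_prod_compl D _).symm
    have hmerge : (∏ i ∈ D, ∏ j ∈ ({l}ᶜ : Finset (Fin (n + 1))),
          (x (k.succAbove i) - y j) / (x (k.succAbove i) - t * y j)) *
          ∏ i ∈ D, (x (k.succAbove i) - y l) / (x (k.succAbove i) - t * y l)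
        = ∏ i ∈ D, auxF t (x ∘ k.succAbove) y i := by
      rw [← Finset.prod_mul_distrib]
      refine Finset.prod_congr rfl fun i _ => ?_
      rw [auxF, compl_singleton, Function.comp_apply]
      exact Finset.prod_erase_mul _ _ (Finset.mem_univ l)
    calc (-1 : K) ^ D.card * t ^ (D.card.choose 2) * auxX t (x ∘ k.succAbove) D *
          (∏ i ∈ D, ∏ j ∈ ({l}ᶜ : Finset (Fin (n + 1))),
            (x (k.succAbove i) - y j) / (x (k.succAbove i) - t * y j)) *
          (y l / (x k - t * y l)) *
          (∏ i : Fin m, (x (k.succAbove i) - y l) / (x (k.succAbove i) - t * y l)) *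
          (∏ i ∈ ({l}ᶜ : Finset (Fin (n + 1))), (y i - t * y l) / (y i - y l))
        = ((-1 : K) ^ D.card * t ^ (D.card.choose 2) * auxX t (x ∘ k.succAbove) D *
            ((∏ i ∈ D, ∏ j ∈ ({l}ᶜ : Finset (Fin (n + 1))),
              (x (k.succAbove i) - y j) / (x (k.succAbove i) - t * y j)) *
             ∏ i ∈ D, (x (k.succAbove i) - y l) / (x (k.succAbove i) - t * y l))) *
          (y l / (x k - t * y l) *
            ((∏ i ∈ Dᶜ, (x (k.succAbove i) - y l) / (x (k.succAbove i) - t * y l)) *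
              ∏ i ∈ ({l}ᶜ : Finset (Fin (n + 1))), (y i - t * y l) / (y i - y l))) := by
          rw [hsplit]; ring
      _ = auxG t (x ∘ k.succAbove) y D *
          (y l / (x k - t * y l) *
            ((∏ i ∈ Dᶜ, (x (k.succAbove i) - y l) / (x (k.succAbove i) - t * y l)) *
              ∏ i ∈ ({l}ᶜ : Finset (Fin (n + 1))), (y i - t * y l) / (y i - y l))) := by
          rw [hmerge, auxG]
  rw [Finset.sum_congr rfl (fun l _ => hstep1 l)]
  simp only [Finset.mul_sum]
  rw [Finset.sum_comm]
  refine Finset.sum_congr rfl fun D _ => ?_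
  rw [← stepW t ht x y hx hy hxy k D]
  simp only [Finset.mul_sum]
  refine Finset.sum_congr rfl fun l _ => ?_
  ring


lemma xrel {m : ℕ} (t : K) (x' : Fin m → K) (D : Finset (Fin m)) (j : Fin m) (hj : j ∉ D) :
    auxX t x' (insert j D) * ∏ i ∈ D, (x' i - t * x' j) / (x' i - x' j)
    = auxX t x' D * ∏ i ∈ Dᶜ.erase j, (x' j - t * x' i) / (x' j - x' i) := by
  have hjc : j ∈ (Dᶜ : Finset (Fin m)) := Finset.mem_compl.2 hj
  rw [auxX, auxX, Finset.compl_insert, Finset.prod_insert hj]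
  have hsplit : ∀ i ∈ D, ∏ i' ∈ (Dᶜ : Finset (Fin m)), (x' i - t * x' i') / (x' i - x' i')
      = ((x' i - t * x' j) / (x' i - x' j)) *
        ∏ i' ∈ Dᶜ.erase j, (x' i - t * x' i') / (x' i - x' i') :=
    fun i _ => (Finset.mul_prod_erase _ _ hjc).symm
  rw [Finset.prod_congr rfl hsplit, Finset.prod_mul_distrib]
  ring

lemma keyterm {m n : ℕ} (t : K) (x' : Fin m → K) (y : Fin (n + 1) → K) (z : K)
    (D : Finset (Fin m)) (j : Fin m) (hj : j ∉ D) :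
    auxG t x' y (insert j D) *
      ((1 - t) * (x' j / (z - x' j) *
        ∏ i ∈ (insert j D).erase j, (x' i - t * x' j) / (x' i - x' j)))
    = -(auxG t x' y D * t ^ D.card *
        ((1 - t) * x' j *
          (∏ i ∈ Dᶜ.erase j, (x' j - t * x' i) / (x' j - x' i)) *
          (auxF t x' y j) / (z - x' j))) := by
  rw [Finset.erase_insert hj]
  have hch : (D.card + 1).choose 2 = D.card.choose 2 + D.card := by
    rw [Nat.choose_succ_succ, Nat.choose_one_right, Nat.add_comm]
  simp only [auxG]
  rw [Finset.card_insert_of_notMem hj, hch, pow_succ, pow_add,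
    Finset.prod_insert hj]
  linear_combination (-((-1 : K) ^ D.card * t ^ (D.card.choose 2) * t ^ D.card * (1 - t) *
    x' j * (∏ i ∈ D, auxF t x' y i) * auxF t x' y j / (z - x' j))) * xrel t x' D j hj

lemma stepX {m n : ℕ} (t : K) (ht : t ≠ 0) (x : Fin (m + 1) → K) (y : Fin (n + 1) → K)
    (hx : Function.Injective x) (k : Fin (m + 1)) :
    ∑ D : Finset (Fin m), auxG t (x ∘ k.succAbove) y D *
        ∏ i ∈ D, (x (k.succAbove i) - t * x k) / (x (k.succAbove i) - x k)
    = ∑ D : Finset (Fin m), (auxG t (x ∘ k.succAbove) y D * t ^ D.card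
        + auxG t (x ∘ k.succAbove) y D * t ^ D.card *
          ∑ j ∈ Dᶜ, (1 - t) * x (k.succAbove j) *
            (∏ i ∈ Dᶜ.erase j, (x (k.succAbove j) - t * x (k.succAbove i)) /
              (x (k.succAbove j) - x (k.succAbove i))) *
            (∏ l, (x (k.succAbove j) - y l) / (x (k.succAbove j) - t * y l)) /
            (x k - x (k.succAbove j))) := by
  have hAA : ∀ D : Finset (Fin m),
      ∏ i ∈ D, (x (k.succAbove i) - t * x k) / (x (k.succAbove i) - x k)
      = t ^ D.card - (1 - t) * ∑ j ∈ D, x (k.succAbove j) / (x k - x (k.succAbove j)) *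
          ∏ i ∈ D.erase j, (x (k.succAbove i) - t * x (k.succAbove j)) /
            (x (k.succAbove i) - x (k.succAbove j)) := by
    intro D
    exact pf_x D (fun i => x (k.succAbove i)) t ht
      (fun a _ b _ h => Fin.succAbove_right_injective (hx h))
      (x k) (fun i _ h => Fin.succAbove_ne k i (hx h.symm))
  have hmain : ∑ D : Finset (Fin m), auxG t (x ∘ k.succAbove) y D *
        ∏ i ∈ D, (x (k.succAbove i) - t * x k) / (x (k.succAbove i) - x k)
      = ∑ D : Finset (Fin m), (auxG t (x ∘ k.succAbove) y D * t ^ D.card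
          - ∑ j ∈ D, auxG t (x ∘ k.succAbove) y D *
              ((1 - t) * (x (k.succAbove j) / (x k - x (k.succAbove j)) *
                ∏ i ∈ D.erase j, (x (k.succAbove i) - t * x (k.succAbove j)) /
                  (x (k.succAbove i) - x (k.succAbove j))))) := by
    refine Finset.sum_congr rfl fun D _ => ?_
    rw [hAA D, mul_sub]
    congr 1
    simp only [Finset.mul_sum]
  rw [hmain, Finset.sum_sub_distrib,
    sum_insert_reindex (fun D j => auxG t (x ∘ k.succAbove) y D *
      ((1 - t) * (x (k.succAbove j) / (x k - x (k.succAbove j)) *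
        ∏ i ∈ D.erase j, (x (k.succAbove i) - t * x (k.succAbove j)) /
          (x (k.succAbove i) - x (k.succAbove j))))),
    Finset.sum_add_distrib, sub_eq_add_neg]
  congr 1
  rw [← Finset.sum_neg_distrib]
  refine Finset.sum_congr rfl fun D _ => ?_
  rw [← Finset.sum_neg_distrib, Finset.mul_sum]
  refine Finset.sum_congr rfl fun j hj => ?_
  have hjD : j ∉ D := Finset.mem_compl.1 hj
  have hkt := keyterm t (fun i => x (k.succAbove i)) y (x k) D j hjD
  simp only [auxG, auxF, auxX, Function.comp_apply] at hkt ⊢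
  rw [hkt]
  ring
end MainAux

/-- The recursion of Proposition 3.4 for `ω(x,y;t)`. -/
theorem bisymOmega_recursion {K : Type*} [Field K] {m n : ℕ} (hmn : m ≤ n)
    (t : K) (ht : t ≠ 0)
    (x : Fin (m + 1) → K) (y : Fin (n + 1) → K)
    (hx : Function.Injective x) (hy : Function.Injective y)
    (hxy : ∀ (i : Fin (m + 1)) (j : Fin (n + 1)), x i ≠ t * y j)
    (k : Fin (m + 1)) :
    bisymOmega t x y =
      t ^ ((m : ℤ) - (n : ℤ)) * (1 - t) *
        ∑ l : Fin (n + 1),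
          bisymOmega t (x ∘ k.succAbove) (y ∘ l.succAbove) *
            (y l / (x k - t * y l)) *
            (∏ i ∈ ({k}ᶜ : Finset (Fin (m + 1))), (x i - y l) / (x i - t * y l)) *
            (∏ i ∈ ({l}ᶜ : Finset (Fin (n + 1))), (y i - t * y l) / (y i - y l)) := by
  rw [stepL t x y k, stepR t ht x y hx hy hxy k]
  rw [Finset.sum_sub_distrib, stepX t ht x y hx k, ← Finset.sum_sub_distrib]
  refine Finset.sum_congr rfl fun D _ => ?_
  ring
end

section
/- Let K be a field, let m, n be integers with 0 ≤ m ≤ n, let u ∈ K, let t ∈ K be nonzero, let x = (x_1, …, x_m) ∈ K^m have pairwise distinct nonzero entries, let y = (y_1, …, y_n) ∈ K^n have nonzero entries, and assume t·x_i·y_j ≠ 1 for all 1 ≤ i ≤ m, 1 ≤ j ≤ n. Then F(u; x, y; t) = F(u·t^{m−n−1}; x^{−1}, y^{−1}; t^{−1}), where x^{−1} = (x_1^{−1}, …, x_m^{−1}) and y^{−1} = (y_1^{−1}, …, y_n^{−1}). -/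
open Finset

/-! Inverting all variables rescales every factor of a summand of `bisymF` by a power of `t`;
the weights of the summands then match because `k (k - 1) = 2 · C(k, 2)`. Thanks to the junk
value `x / 0 = 0`, the factor identities also hold when a denominator vanishes. -/

section FactorIdentities

variable {K : Type*} [Field K] {t a b : K}

lemma inv_mul_inv_sub_inv_div_inv_sub_inv (ht : t ≠ 0) (ha : a ≠ 0) (hb : b ≠ 0) :
    (t⁻¹ * a⁻¹ - b⁻¹) / (a⁻¹ - b⁻¹) = t⁻¹ * ((t * a - b) / (a - b)) := by
  rcases eq_or_ne a b with rfl | hab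
  · simp
  · have : a - b ≠ 0 := sub_ne_zero.2 hab
    field_simp
    ring

lemma one_sub_inv_mul_inv_div_one_sub_inv_mul_inv (ht : t ≠ 0) (ha : a ≠ 0) (hb : b ≠ 0) :
    (1 - a⁻¹ * b⁻¹) / (1 - t⁻¹ * a⁻¹ * b⁻¹) = t * ((1 - a * b) / (1 - t * a * b)) := by
  rcases eq_or_ne (t * a * b) 1 with h | h
  · have : t⁻¹ * a⁻¹ * b⁻¹ = 1 := by rw [← mul_inv, ← mul_inv, h, inv_one]
    simp [h, this]
  · have hden : 1 - t * a * b ≠ 0 := sub_ne_zero.2 (Ne.symm h)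
    have hden_inv : 1 - t⁻¹ * a⁻¹ * b⁻¹ ≠ 0 := by
      rw [sub_ne_zero, ne_comm, ← mul_inv, ← mul_inv]
      exact fun h' => h (inv_eq_one.1 h')
    rw [div_eq_iff hden_inv, mul_div_assoc', div_mul_eq_mul_div, eq_div_iff hden]
    field_simp
    ring

end FactorIdentities

section Products

variable {K : Type*} [Field K] {m n : ℕ} {t : K} {x : Fin m → K} {y : Fin n → K}

lemma prod_prod_compl_inv (ht : t ≠ 0) (hx0 : ∀ i, x i ≠ 0) (I : Finset (Fin m)) :
    ∏ i ∈ I, ∏ j ∈ Iᶜ, (t⁻¹ * (x i)⁻¹ - (x j)⁻¹) / ((x i)⁻¹ - (x j)⁻¹) =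
      t⁻¹ ^ (#I * #Iᶜ) * ∏ i ∈ I, ∏ j ∈ Iᶜ, (t * x i - x j) / (x i - x j) := by
  simp only [inv_mul_inv_sub_inv_div_inv_sub_inv ht (hx0 _) (hx0 _), prod_mul_distrib,
    prod_const, pow_mul']

lemma prod_prod_univ_inv (ht : t ≠ 0) (hx0 : ∀ i, x i ≠ 0) (hy0 : ∀ j, y j ≠ 0)
    (I : Finset (Fin m)) :
    ∏ i ∈ I, ∏ j, (1 - (x i)⁻¹ * (y j)⁻¹) / (1 - t⁻¹ * (x i)⁻¹ * (y j)⁻¹) =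
      t ^ (#I * n) * ∏ i ∈ I, ∏ j, (1 - x i * y j) / (1 - t * x i * y j) := by
  simp only [one_sub_inv_mul_inv_div_one_sub_inv_mul_inv ht (hx0 _) (hy0 _), prod_mul_distrib,
    prod_const, card_univ, Fintype.card_fin, pow_mul']

end Products

lemma two_mul_cast_choose_two (k : ℕ) : 2 * (k.choose 2 : ℤ) = k * (k - 1) := by
  have h : ((2 * k.choose 2 : ℤ) : ℚ) = ((k * (k - 1) : ℤ) : ℚ) := by
    push_cast
    rw [Nat.cast_choose_two]
    ring
  exact_mod_cast h

lemma neg_mul_zpow_pow_mul_inv_pow {K : Type*} [Field K] {t : K} (ht : t ≠ 0) (u : K)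
    (k l n : ℕ) :
    (-(u * t ^ ((k + l : ℤ) - n - 1))) ^ k * t⁻¹ ^ k.choose 2 * t⁻¹ ^ (k * l) * t ^ (k * n) =
      (-u) ^ k * t ^ k.choose 2 := by
  rw [neg_mul_eq_neg_mul, mul_pow, ← zpow_natCast (t ^ _) k, ← zpow_mul]
  simp only [inv_pow, ← zpow_natCast t, ← zpow_neg, mul_assoc, ← zpow_add₀ ht]
  congr 2
  push_cast
  linear_combination (-1 : ℤ) * two_mul_cast_choose_two k

theorem bisymF_inv_general {K : Type*} [Field K] {m n : ℕ}
    (u t : K) (ht : t ≠ 0)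
    (x : Fin m → K) (y : Fin n → K)
    (hx0 : ∀ i, x i ≠ 0) (hy0 : ∀ j, y j ≠ 0) :
    bisymF u t x y =
      bisymF (u * t ^ ((m : ℤ) - (n : ℤ) - 1)) t⁻¹
        (fun i => (x i)⁻¹) (fun j => (y j)⁻¹) := by
  refine sum_congr rfl fun I _ => ?_
  have hm : (m : ℤ) = #I + #Iᶜ := by
    rw [← Nat.cast_add, card_add_card_compl, Fintype.card_fin]
  rw [prod_prod_compl_inv ht hx0, prod_prod_univ_inv ht hx0 hy0, hm,
    ← neg_mul_zpow_pow_mul_inv_pow ht u #I #Iᶜ n]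
  ring

/-- The inversion symmetry `F(u;x,y;t) = F(u·t^{m-n-1};x⁻¹,y⁻¹;t⁻¹)`. -/
theorem bisymF_inv {K : Type*} [Field K] {m n : ℕ} (hmn : m ≤ n)
    (u t : K) (ht : t ≠ 0)
    (x : Fin m → K) (y : Fin n → K)
    (hx : Function.Injective x)
    (hx0 : ∀ i, x i ≠ 0) (hy0 : ∀ j, y j ≠ 0)
    (hxy : ∀ (i : Fin m) (j : Fin n), t * x i * y j ≠ 1) :
    bisymF u t x y =
      bisymF (u * t ^ ((m : ℤ) - (n : ℤ) - 1)) t⁻¹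
        (fun i => (x i)⁻¹) (fun j => (y j)⁻¹) :=
  bisymF_inv_general u t ht x y hx0 hy0
end

section
/- Let K be a field, let n be a positive integer, let t ∈ K with t ≠ 1, let u = (u_1, …, u_n) ∈ K^n have pairwise distinct entries, let v = (v_1, …, v_n) ∈ K^n have pairwise distinct entries, and assume u_i ≠ t·v_j for all 1 ≤ i, j ≤ n. Then Σ_{(σ,τ) ∈ S_n × S_n} ∏_{i=1}^{n} 1/(u_{σ(i)} − t·v_{τ(i)}) · ∏_{1 ≤ i < j ≤ n} [(u_{σ(i)} − t·u_{σ(j)})/(u_{σ(i)} − u_{σ(j)})] · [(u_{σ(i)} − v_{τ(j)})/(u_{σ(i)} − t·v_{τ(j)})] · [(v_{τ(i)} − t·v_{τ(j)})/(v_{τ(i)} − v_{τ(j)})] = [(t;t)_n/(1 − t)^n] · Σ_{τ ∈ S_n} ∏_{i=1}^{n} 1/(u_i − t·v_{τ(i)}) · ∏_{1 ≤ i < j ≤ n} [(u_i − v_{τ(j)})/(u_i − t·v_{τ(j)})] · [(v_{τ(i)} − t·v_{τ(j)})/(v_{τ(i)} − v_{τ(j)})], where S_n is the symmetric group on {1,…,n}.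 -/
open Finset

section DSIproof
variable {K : Type*} [Field K] {n : ℕ}

variable {K : Type*} [Field K] {n : ℕ}

private lemma swap_val {a b : Fin n} (hne : a ≠ b) (j : Fin n) :
    ((Equiv.swap a b) j : ℕ)
      = if (j:ℕ) = (a:ℕ) then (b:ℕ) else if (j:ℕ) = (b:ℕ) then (a:ℕ) else (j:ℕ) := by
  by_cases h1 : j = a
  · rw [h1, Equiv.swap_apply_left, if_pos rfl]
  · by_cases h2 : j = b
    · rw [h2, Equiv.swap_apply_right, if_neg (fun h => hne (Fin.ext h).symm), if_pos rfl]
    · rw [Equiv.swap_apply_of_ne_of_ne h1 h2, if_neg (fun h => h1 (Fin.ext h)),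
        if_neg (fun h => h2 (Fin.ext h))]

/-- The diagonal pair set. -/
private def SS (n : ℕ) : Finset (Σ _ : Fin n, Fin n) :=
  (univ : Finset (Fin n)).sigma (fun i => Ioi i)

private lemma mem_SS {p : Σ _ : Fin n, Fin n} : p ∈ SS n ↔ p.1 < p.2 := by
  cases p; simp [SS, Finset.mem_sigma, Finset.mem_Ioi]

section swapprods

variable {a b : Fin n} (hab : (a:ℕ)+1 = b)

private lemma hne_of (hab : (a:ℕ)+1 = b) : a ≠ b := by intro h; rw [h] at hab; omega
private lemma hlt_of (hab : (a:ℕ)+1 = b) : a < b := by rw [Fin.lt_def]; omega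

private lemma mem_SSe (hab : (a:ℕ)+1 = b) : (⟨a, b⟩ : Σ _ : Fin n, Fin n) ∈ SS n :=
  mem_SS.mpr (hlt_of hab)

include hab in
private lemma stab_both {p : Σ _ : Fin n, Fin n} (hp : p ∈ (SS n).erase ⟨a, b⟩) :
    (⟨Equiv.swap a b p.1, Equiv.swap a b p.2⟩ : Σ _ : Fin n, Fin n) ∈ (SS n).erase ⟨a, b⟩ := by
  obtain ⟨i, j⟩ := p
  simp only [Finset.mem_erase, mem_SS, Ne, Sigma.mk.inj_iff, heq_eq_eq, not_and,
    Fin.lt_def, Fin.ext_iff] at hp ⊢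
  rw [swap_val (hne_of hab) j, swap_val (hne_of hab) i]
  obtain ⟨h1, h2⟩ := hp
  split_ifs <;> omega

include hab in
private lemma stab_right {p : Σ _ : Fin n, Fin n} (hp : p ∈ (SS n).erase ⟨a, b⟩) :
    (⟨p.1, Equiv.swap a b p.2⟩ : Σ _ : Fin n, Fin n) ∈ (SS n).erase ⟨a, b⟩ := by
  obtain ⟨i, j⟩ := p
  simp only [Finset.mem_erase, mem_SS, Ne, Sigma.mk.inj_iff, heq_eq_eq, not_and,
    Fin.lt_def, Fin.ext_iff] at hp ⊢
  rw [swap_val (hne_of hab) j]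
  obtain ⟨h1, h2⟩ := hp
  split_ifs <;> omega

include hab in
private lemma stab_left {p : Σ _ : Fin n, Fin n} (hp : p ∈ (SS n).erase ⟨a, b⟩) :
    (⟨Equiv.swap a b p.1, p.2⟩ : Σ _ : Fin n, Fin n) ∈ (SS n).erase ⟨a, b⟩ := by
  obtain ⟨i, j⟩ := p
  simp only [Finset.mem_erase, mem_SS, Ne, Sigma.mk.inj_iff, heq_eq_eq, not_and,
    Fin.lt_def, Fin.ext_iff] at hp ⊢
  rw [swap_val (hne_of hab) i]
  obtain ⟨h1, h2⟩ := hp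
  split_ifs <;> omega

variable {M : Type*} [CommMonoid M]

include hab in
private lemma prodSS_both (G : Fin n → Fin n → M) :
    ∏ p ∈ (SS n).erase ⟨a, b⟩, G (Equiv.swap a b p.1) (Equiv.swap a b p.2)
      = ∏ p ∈ (SS n).erase ⟨a, b⟩, G p.1 p.2 :=
  Finset.prod_nbij' (fun p => ⟨Equiv.swap a b p.1, Equiv.swap a b p.2⟩)
    (fun p => ⟨Equiv.swap a b p.1, Equiv.swap a b p.2⟩)
    (fun p hp => stab_both hab hp) (fun p hp => stab_both hab hp)
    (fun p _ => by obtain ⟨i,j⟩ := p; simp) (fun p _ => by obtain ⟨i,j⟩ := p; simp)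
    (fun p _ => rfl)

include hab in
private lemma prodSS_right (G : Fin n → Fin n → M) :
    ∏ p ∈ (SS n).erase ⟨a, b⟩, G p.1 (Equiv.swap a b p.2)
      = ∏ p ∈ (SS n).erase ⟨a, b⟩, G p.1 p.2 :=
  Finset.prod_nbij' (fun p => ⟨p.1, Equiv.swap a b p.2⟩) (fun p => ⟨p.1, Equiv.swap a b p.2⟩)
    (fun p hp => stab_right hab hp) (fun p hp => stab_right hab hp)
    (fun p _ => by obtain ⟨i,j⟩ := p; simp) (fun p _ => by obtain ⟨i,j⟩ := p; simp)
    (fun p _ => rfl)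

include hab in
private lemma prodSS_left (G : Fin n → Fin n → M) :
    ∏ p ∈ (SS n).erase ⟨a, b⟩, G (Equiv.swap a b p.1) p.2
      = ∏ p ∈ (SS n).erase ⟨a, b⟩, G p.1 p.2 :=
  Finset.prod_nbij' (fun p => ⟨Equiv.swap a b p.1, p.2⟩) (fun p => ⟨Equiv.swap a b p.1, p.2⟩)
    (fun p hp => stab_left hab hp) (fun p hp => stab_left hab hp)
    (fun p _ => by obtain ⟨i,j⟩ := p; simp) (fun p _ => by obtain ⟨i,j⟩ := p; simp)
    (fun p _ => rfl)

end swapprods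
set_option maxHeartbeats 1000000 in
lemma pairstep (t a b xx yy : K) (hax : a - t*xx ≠ 0) (hay : a - t*yy ≠ 0)
    (hbx : b - t*xx ≠ 0) (hby : b - t*yy ≠ 0) (hxy : xx - yy ≠ 0) :
    1/(a - t*xx) * (1/(b - t*yy)) * ((a - yy)/(a - t*yy)) * ((xx - t*yy)/(xx - yy))
      + 1/(a - t*yy) * (1/(b - t*xx)) * ((a - xx)/(a - t*xx)) * ((yy - t*xx)/(yy - xx))
    = 1/(b - t*xx) * (1/(a - t*yy)) * ((b - yy)/(b - t*yy)) * ((xx - t*yy)/(xx - yy))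
      + 1/(b - t*yy) * (1/(a - t*xx)) * ((b - xx)/(b - t*xx)) * ((yy - t*xx)/(yy - xx)) := by
  have hyx : yy - xx ≠ 0 := fun h => hxy (by linear_combination -h)
  simp only [div_mul_div_comm, one_mul]
  rw [div_add_div _ _ (by simp [hax, hay, hbx, hby, hxy]) (by simp [hax, hay, hbx, hby, hyx]),
      div_add_div _ _ (by simp [hax, hay, hbx, hby, hxy]) (by simp [hax, hay, hbx, hby, hyx]),
      div_eq_div_iff (by simp [hax, hay, hbx, hby, hxy, hyx]) (by simp [hax, hay, hbx, hby, hxy, hyx])]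
  ring

section PH
private def Phat (t : K) (x w : Fin n → K) : K :=
  (∏ i, 1 / (x i - t * w i)) *
    ∏ i, ∏ j ∈ Ioi i, ((x i - w j) / (x i - t * w j) * ((w i - t * w j) / (w i - w j)))

section fac
variable {a b : Fin n} (hab : (a:ℕ)+1 = b)


include hab in
private lemma Phat_factor (t : K) (x w : Fin n → K) :
    Phat t x w =
      (1/(x a - t*w a) * (1/(x b - t*w b)) * ((x a - w b)/(x a - t*w b))
          * ((w a - t*w b)/(w a - w b)))
        * ((∏ i ∈ (univ.erase a).erase b, 1 / (x i - t * w i))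
          * (∏ p ∈ (SS n).erase ⟨a, b⟩, (x p.1 - w p.2) / (x p.1 - t * w p.2))
          * (∏ p ∈ (SS n).erase ⟨a, b⟩, (w p.1 - t * w p.2) / (w p.1 - w p.2))) := by
  have hbmem : b ∈ (univ : Finset (Fin n)).erase a := by
    simp [Finset.mem_erase, (hne_of hab).symm]
  have hd : (∏ i, 1 / (x i - t * w i))
      = (1/(x a - t*w a)) * ((1/(x b - t*w b)) *
          ∏ i ∈ (univ.erase a).erase b, 1 / (x i - t * w i)) := by
    rw [Finset.mul_prod_erase _ (fun i => 1/(x i - t*w i)) hbmem,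
      Finset.mul_prod_erase _ (fun i => 1/(x i - t*w i)) (mem_univ a)]
  have hBC : (∏ i, ∏ j ∈ Ioi i, ((x i - w j) / (x i - t * w j) * ((w i - t * w j) / (w i - w j))))
      = (((x a - w b)/(x a - t*w b)) *
            ∏ p ∈ (SS n).erase ⟨a, b⟩, (x p.1 - w p.2) / (x p.1 - t * w p.2))
        * (((w a - t*w b)/(w a - w b)) *
            ∏ p ∈ (SS n).erase ⟨a, b⟩, (w p.1 - t * w p.2) / (w p.1 - w p.2)) := by
    rw [prod_sigma']
    rw [show ((univ : Finset (Fin n)).sigma fun i => Ioi i) = SS n from rfl]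
    rw [Finset.prod_mul_distrib,
      ← Finset.mul_prod_erase _ (fun p : Σ _ : Fin n, Fin n => (x p.1 - w p.2) / (x p.1 - t * w p.2)) (mem_SSe hab),
      ← Finset.mul_prod_erase _ (fun p : Σ _ : Fin n, Fin n => (w p.1 - t * w p.2) / (w p.1 - w p.2)) (mem_SSe hab)]
  rw [Phat, hd, hBC]; ring
end fac

end PH

section TTx
variable {a b : Fin n} (hab : (a:ℕ)+1 = b)

include hab in
private lemma two_term (t : K) (x w : Fin n → K)
    (hw : Function.Injective w) (hxw : ∀ i j, x i - t * w j ≠ 0) :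
    Phat t (x ∘ Equiv.swap a b) w + Phat t (x ∘ Equiv.swap a b) (w ∘ Equiv.swap a b)
      = Phat t x w + Phat t x (w ∘ Equiv.swap a b) := by
  set s := Equiv.swap a b with hs
  have hne : a ≠ b := hne_of hab
  have hsa : s a = b := Equiv.swap_apply_left a b
  have hsb : s b = a := Equiv.swap_apply_right a b
  have hoff : ∀ i : Fin n, i ≠ a → i ≠ b → s i = i := fun i h1 h2 =>
    Equiv.swap_apply_of_ne_of_ne h1 h2
  -- abbreviations
  set A := x a with hA; set B := x b with hB; set X := w a with hX; set Y := w b with hY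
  set D := ∏ i ∈ ((univ : Finset (Fin n)).erase a).erase b, 1 / (x i - t * w i) with hD
  set RB := ∏ p ∈ (SS n).erase ⟨a, b⟩, (x p.1 - w p.2) / (x p.1 - t * w p.2) with hRB
  set RC := ∏ p ∈ (SS n).erase ⟨a, b⟩, (w p.1 - t * w p.2) / (w p.1 - w p.2) with hRC
  -- the four expansions
  have e1 : Phat t x w
      = (1/(A - t*X) * (1/(B - t*Y)) * ((A - Y)/(A - t*Y)) * ((X - t*Y)/(X - Y)))
        * (D * RB * RC) := Phat_factor hab t x w
  have e2 : Phat t x (w ∘ s)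
      = (1/(A - t*Y) * (1/(B - t*X)) * ((A - X)/(A - t*X)) * ((Y - t*X)/(Y - X)))
        * (D * RB * RC) := by
    rw [Phat_factor hab t x (w ∘ s)]
    have c1 : ∀ i ∈ ((univ : Finset (Fin n)).erase a).erase b,
        1 / (x i - t * (w ∘ s) i) = 1 / (x i - t * w i) := by
      intro i hi; simp only [Finset.mem_erase] at hi
      simp [Function.comp, hoff i hi.2.1 hi.1]
    have c2 : (∏ p ∈ (SS n).erase ⟨a, b⟩, (x p.1 - (w ∘ s) p.2) / (x p.1 - t * (w ∘ s) p.2)) = RB := by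
      rw [hRB]
      exact prodSS_right hab (fun i j => (x i - w j) / (x i - t * w j))
    have c3 : (∏ p ∈ (SS n).erase ⟨a, b⟩, ((w ∘ s) p.1 - t * (w ∘ s) p.2) / ((w ∘ s) p.1 - (w ∘ s) p.2)) = RC := by
      rw [hRC]
      exact prodSS_both hab (fun i j => (w i - t * w j) / (w i - w j))
    rw [Finset.prod_congr rfl c1, c2, c3]
    simp only [Function.comp_apply, hsa, hsb]
    rfl
  have e3 : Phat t (x ∘ s) w
      = (1/(B - t*X) * (1/(A - t*Y)) * ((B - Y)/(B - t*Y)) * ((X - t*Y)/(X - Y)))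
        * (D * RB * RC) := by
    rw [Phat_factor hab t (x ∘ s) w]
    have c1 : ∀ i ∈ ((univ : Finset (Fin n)).erase a).erase b,
        1 / ((x ∘ s) i - t * w i) = 1 / (x i - t * w i) := by
      intro i hi; simp only [Finset.mem_erase] at hi
      simp [Function.comp, hoff i hi.2.1 hi.1]
    have c2 : (∏ p ∈ (SS n).erase ⟨a, b⟩, ((x ∘ s) p.1 - w p.2) / ((x ∘ s) p.1 - t * w p.2)) = RB := by
      rw [hRB]
      exact prodSS_left hab (fun i j => (x i - w j) / (x i - t * w j))
    rw [Finset.prod_congr rfl c1, c2]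
    simp only [Function.comp_apply, hsa, hsb]
    rfl
  have e4 : Phat t (x ∘ s) (w ∘ s)
      = (1/(B - t*Y) * (1/(A - t*X)) * ((B - X)/(B - t*X)) * ((Y - t*X)/(Y - X)))
        * (D * RB * RC) := by
    rw [Phat_factor hab t (x ∘ s) (w ∘ s)]
    have c1 : ∀ i ∈ ((univ : Finset (Fin n)).erase a).erase b,
        1 / ((x ∘ s) i - t * (w ∘ s) i) = 1 / (x i - t * w i) := by
      intro i hi; simp only [Finset.mem_erase] at hi
      simp [Function.comp, hoff i hi.2.1 hi.1]
    have c2 : (∏ p ∈ (SS n).erase ⟨a, b⟩, ((x ∘ s) p.1 - (w ∘ s) p.2) / ((x ∘ s) p.1 - t * (w ∘ s) p.2)) = RB := by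
      rw [hRB]
      exact prodSS_both hab (fun i j => (x i - w j) / (x i - t * w j))
    have c3 : (∏ p ∈ (SS n).erase ⟨a, b⟩, ((w ∘ s) p.1 - t * (w ∘ s) p.2) / ((w ∘ s) p.1 - (w ∘ s) p.2)) = RC := by
      rw [hRC]
      exact prodSS_both hab (fun i j => (w i - t * w j) / (w i - w j))
    rw [Finset.prod_congr rfl c1, c2, c3]
    simp only [Function.comp_apply, hsa, hsb]
    rfl
  rw [e1, e2, e3, e4, ← add_mul, ← add_mul]
  congr 1
  have hXY : X - Y ≠ 0 := sub_ne_zero.mpr (fun h => hne (hw h))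
  exact (pairstep t A B X Y (hxw a a) (hxw a b) (hxw b a) (hxw b b) hXY).symm

include hab in
private lemma H_swap (t : K) (x v : Fin n → K) (hv : Function.Injective v)
    (hxv : ∀ i j, x i - t * v j ≠ 0) :
    ∑ τ : Equiv.Perm (Fin n), Phat t (x ∘ Equiv.swap a b) (v ∘ τ)
      = ∑ τ : Equiv.Perm (Fin n), Phat t x (v ∘ τ) := by
  set s := Equiv.swap a b with hs
  rw [← sub_eq_zero, ← Finset.sum_sub_distrib]
  refine Finset.sum_involution (fun τ _ => τ * s) ?_ ?_ (fun τ _ => Finset.mem_univ _) ?_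
  · intro τ _
    have hcomp : v ∘ ⇑(τ * s) = (v ∘ τ) ∘ s := by
      funext i; simp [Function.comp, Equiv.Perm.mul_apply]
    have h2 := two_term hab t x (v ∘ τ) (hv.comp τ.injective)
      (fun i j => hxv i (τ j))
    rw [hcomp]
    linear_combination h2
  · intro τ _ hf heq
    have h1 : τ * s = τ * 1 := by rw [mul_one]; exact heq
    exact hne_of hab (Equiv.swap_eq_one_iff.mp (mul_left_cancel h1))
  · intro τ _
    show τ * s * s = τ
    rw [mul_assoc, Equiv.swap_mul_self, mul_one]

private lemma H_perm {m : ℕ} (t : K) (x v : Fin (m+1) → K) (hv : Function.Injective v)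
    (hxv : ∀ i j, x i - t * v j ≠ 0) (σ : Equiv.Perm (Fin (m+1))) :
    ∑ τ : Equiv.Perm (Fin (m+1)), Phat t (x ∘ σ) (v ∘ τ)
      = ∑ τ : Equiv.Perm (Fin (m+1)), Phat t x (v ∘ τ) := by
  have hσ : σ ∈ Submonoid.closure (Set.range fun i : Fin m => Equiv.swap i.castSucc i.succ) := by
    rw [Equiv.Perm.mclosure_swap_castSucc_succ]; trivial
  revert x
  refine Submonoid.closure_induction ?_ ?_ ?_ hσ
  · rintro σ' ⟨i, rfl⟩ x hxv
    exact H_swap (a := i.castSucc) (b := i.succ) (by simp) t x v hv hxv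
  · intro x hxv
    have : x ∘ ⇑(1 : Equiv.Perm (Fin (m+1))) = x := by funext i; simp
    rw [this]
  · intro σ₁ σ₂ _ _ h1 h2 x hxv
    have hc : x ∘ ⇑(σ₁ * σ₂) = (x ∘ σ₁) ∘ σ₂ := by
      funext i; simp [Function.comp, Equiv.Perm.mul_apply]
    rw [hc, h2 (x ∘ σ₁) (fun i j => hxv (σ₁ i) j), h1 x hxv]


end TTx

section DD
open Polynomial

private lemma geom_aux (t : K) (n : ℕ) : (∑ k ∈ range n, t ^ k) * (1 - t) = 1 - t ^ n := by
  linear_combination -(geom_sum_mul t n)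

private lemma lemD0 {m : ℕ} (t : K) (ht : t ≠ 1) (x : Fin (m+1) → K)
    (hx : Function.Injective x) (hx0 : ∀ p, x p ≠ 0) :
    ∑ p : Fin (m+1), ∏ j ∈ univ.erase p, (x p - t * x j) / (x p - x j)
      = ∑ k ∈ range (m+1), t ^ k := by
  classical
  have h1t : (1 : K) - t ≠ 0 := fun h => ht (by linear_combination -h)
  set P1 : K[X] := ∏ j : Fin (m+1), (X - C (t * x j)) with hP1
  set P2 : K[X] := ∏ j : Fin (m+1), (X - C (x j)) with hP2
  have hm1 : P1.Monic := monic_prod_of_monic _ _ (fun j _ => monic_X_sub_C _)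
  have hm2 : P2.Monic := monic_prod_of_monic _ _ (fun j _ => monic_X_sub_C _)
  have hdeg1 : P1.degree = (m+1 : ℕ) := by
    rw [hP1, degree_prod]
    simp only [degree_X_sub_C, Finset.sum_const, Finset.card_univ, Fintype.card_fin,
      nsmul_eq_mul, mul_one]
  have hdeg2 : P2.degree = (m+1 : ℕ) := by
    rw [hP2, degree_prod]
    simp only [degree_X_sub_C, Finset.sum_const, Finset.card_univ, Fintype.card_fin,
      nsmul_eq_mul, mul_one]
  have hdf : (P1 - P2).degree < (#(univ : Finset (Fin (m+1))) : ℕ) := by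
    rcases eq_or_ne P1 P2 with h | h
    · simp only [h, sub_self, degree_zero]
      exact_mod_cast WithBot.bot_lt_coe _
    · have := degree_sub_lt (hdeg1.trans hdeg2.symm) hm1.ne_zero
        (by rw [hm1.leadingCoeff, hm2.leadingCoeff])
      rw [hdeg1] at this
      simpa [Finset.card_univ] using this
  have key := Lagrange.eq_interpolate (s := univ) (v := x) (Set.injOn_of_injective hx) hdf
  have keyev := congrArg (Polynomial.eval 0) key
  have hprodneg : ∀ g : Fin (m+1) → K, (∏ j, -g j) = (-1)^(m+1) * ∏ j, g j := by
    intro g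
    rw [show (fun j : Fin (m+1) => -g j) = (fun j => (-1) * g j) from funext (fun j => by ring),
      Finset.prod_mul_distrib, Finset.prod_const, Finset.card_univ, Fintype.card_fin]
  have hL : (P1 - P2).eval 0
      = (-1)^(m+1) * ((t^(m+1)) * ∏ j, x j) - (-1)^(m+1) * ∏ j, x j := by
    rw [eval_sub, hP1, hP2, eval_prod, eval_prod]
    simp only [eval_sub, eval_X, eval_C, zero_sub]
    rw [hprodneg, hprodneg, Finset.prod_mul_distrib, Finset.prod_const, Finset.card_univ,
      Fintype.card_fin]
  have hcard : ∀ p : Fin (m+1), #(univ.erase p) = m := by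
    intro p
    rw [Finset.card_erase_of_mem (mem_univ p), Finset.card_univ, Fintype.card_fin]
    omega
  have hprodnegE : ∀ (p : Fin (m+1)) (g : Fin (m+1) → K),
      (∏ j ∈ univ.erase p, -g j) = (-1)^m * ∏ j ∈ univ.erase p, g j := by
    intro p g
    rw [show (fun j : Fin (m+1) => -g j) = (fun j => (-1) * g j) from funext (fun j => by ring),
      Finset.prod_mul_distrib, Finset.prod_const, hcard]
  have hR : Polynomial.eval 0 (Lagrange.interpolate univ x (fun i => (P1 - P2).eval (x i)))
      = (1-t) * (-1)^m * (∏ j, x j) *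
          ∑ p, ∏ j ∈ univ.erase p, (x p - t * x j) / (x p - x j) := by
    rw [Lagrange.interpolate_apply, Polynomial.eval_finset_sum]
    simp only [eval_mul, eval_C]
    have hterm : ∀ p : Fin (m+1),
        (P1 - P2).eval (x p) * (Lagrange.basis univ x p).eval 0
          = (1-t) * (-1)^m * (∏ j, x j) *
              ∏ j ∈ univ.erase p, (x p - t * x j) / (x p - x j) := by
      intro p
      have hEvalf : (P1 - P2).eval (x p)
          = (1-t) * x p * ∏ j ∈ univ.erase p, (x p - t * x j) := by
        rw [eval_sub, hP1, hP2, eval_prod, eval_prod]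
        simp only [eval_sub, eval_X, eval_C]
        have h0 : (∏ j : Fin (m+1), (x p - x j)) = 0 :=
          Finset.prod_eq_zero (mem_univ p) (sub_self _)
        rw [h0, sub_zero,
          ← Finset.mul_prod_erase univ (fun j => x p - t * x j) (mem_univ p)]
        ring
      have hBasis : (Lagrange.basis univ x p).eval 0
          = ∏ j ∈ univ.erase p, ((x p - x j)⁻¹ * (-x j)) := by
        rw [Lagrange.basis, eval_prod]
        refine Finset.prod_congr rfl fun j _ => ?_
        rw [Lagrange.basisDivisor]
        simp only [eval_mul, eval_C, eval_sub, eval_X, zero_sub]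
      rw [hEvalf, hBasis, Finset.prod_mul_distrib, hprodnegE]
      have h1 : x p * ∏ j ∈ univ.erase p, x j = ∏ j, x j :=
        Finset.mul_prod_erase univ x (mem_univ p)
      have h2 : (∏ j ∈ univ.erase p, (x p - t * x j)) * ∏ j ∈ univ.erase p, (x p - x j)⁻¹
          = ∏ j ∈ univ.erase p, (x p - t * x j) / (x p - x j) := by
        rw [← Finset.prod_mul_distrib]
        exact Finset.prod_congr rfl fun j _ => (div_eq_mul_inv _ _).symm
      calc (1 - t) * x p * (∏ j ∈ univ.erase p, (x p - t * x j)) *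
            ((∏ j ∈ univ.erase p, (x p - x j)⁻¹) * ((-1)^m * ∏ j ∈ univ.erase p, x j))
          = (1-t) * (-1)^m * (x p * ∏ j ∈ univ.erase p, x j) *
            ((∏ j ∈ univ.erase p, (x p - t * x j)) * ∏ j ∈ univ.erase p, (x p - x j)⁻¹) := by
            ring
        _ = _ := by rw [h1, h2]
    rw [Finset.sum_congr rfl (fun p _ => hterm p), ← Finset.mul_sum]
  rw [key, hR] at hL
  have hPx : (∏ j, x j) ≠ 0 := Finset.prod_ne_zero_iff.mpr fun j _ => hx0 j
  have hc : ((1:K)-t) * (-1)^m * (∏ j, x j) ≠ 0 :=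
    mul_ne_zero (mul_ne_zero h1t (pow_ne_zero _ (by norm_num))) hPx
  refine mul_left_cancel₀ hc ?_
  have hg := geom_aux t (m+1)
  have hpn : (-1:K)^(m+1) = (-1)^m * (-1) := pow_succ _ _
  rw [hpn] at hL
  linear_combination hL - ((-1:K))^m * (∏ j, x j) * hg

private lemma lemD {m : ℕ} (t : K) (ht : t ≠ 1) (x : Fin (m+1) → K)
    (hx : Function.Injective x) :
    ∑ p : Fin (m+1), ∏ j ∈ univ.erase p, (x p - t * x j) / (x p - x j)
      = ∑ k ∈ range (m+1), t ^ k := by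
  classical
  by_cases hz : ∀ p, x p ≠ 0
  · exact lemD0 t ht x hx hz
  push_neg at hz; obtain ⟨q, hq⟩ := hz
  rcases m with _ | m
  · simp [Finset.sum_range_one]
  set y : Fin (m+1) → K := fun j => x (q.succAbove j) with hy
  have hyinj : Function.Injective y := hx.comp Fin.succAbove_right_injective
  have hy0 : ∀ j, y j ≠ 0 := fun j h => (Fin.succAbove_ne q j) (hx (h.trans hq.symm))
  have hsum := lemD0 t ht y hyinj hy0
  rw [Fin.sum_univ_succAbove (fun p => ∏ j ∈ univ.erase p, (x p - t * x j) / (x p - x j)) q]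
  have hTq : ∏ j ∈ univ.erase q, (x q - t * x j) / (x q - x j) = t ^ (m+1) := by
    have hc : ∀ j ∈ univ.erase q, (x q - t * x j) / (x q - x j) = t := by
      intro j hj
      have hxj : x j ≠ 0 := fun h => (Finset.mem_erase.mp hj).1 (hx (h.trans hq.symm))
      rw [hq, zero_sub, zero_sub, neg_div_neg_eq, mul_div_assoc, div_self hxj, mul_one]
    rw [Finset.prod_congr rfl hc, Finset.prod_const, Finset.card_erase_of_mem (mem_univ q),
      Finset.card_univ, Fintype.card_fin]
    congr 1
  have hTs : ∀ i : Fin (m+1),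
      (∏ j ∈ univ.erase (q.succAbove i),
        (x (q.succAbove i) - t * x j) / (x (q.succAbove i) - x j))
      = ∏ j ∈ univ.erase i, (y i - t * y j) / (y i - y j) := by
    intro i
    set p := q.succAbove i with hp
    have hxp : x p ≠ 0 := fun h => (Fin.succAbove_ne q i) (hx (h.trans hq.symm))
    have hqp : q ∈ univ.erase p := Finset.mem_erase.mpr ⟨(Fin.succAbove_ne q i).symm, mem_univ _⟩
    rw [← Finset.mul_prod_erase _ (fun j => (x p - t * x j) / (x p - x j)) hqp]
    have hfq : (x p - t * x q) / (x p - x q) = 1 := by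
      rw [hq, mul_zero, sub_zero, div_self hxp]
    rw [hfq, one_mul]
    refine (Finset.prod_nbij (fun j => q.succAbove j) ?_ ?_ ?_ ?_).symm
    · intro j hj
      refine Finset.mem_erase.mpr ⟨Fin.succAbove_ne q j, Finset.mem_erase.mpr ⟨?_, mem_univ _⟩⟩
      exact fun h => (Finset.mem_erase.mp hj).1 (Fin.succAbove_right_injective h)
    · exact fun j _ k _ h => Fin.succAbove_right_injective h
    · intro z hz
      rw [Finset.mem_coe, Finset.mem_erase, Finset.mem_erase] at hz
      obtain ⟨hzq, hzp, _⟩ := hz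
      obtain ⟨w, hw⟩ := Fin.exists_succAbove_eq hzq
      refine ⟨w, ?_, hw⟩
      rw [Finset.mem_coe, Finset.mem_erase]
      exact ⟨fun h => hzp (by rw [← hw, h]), mem_univ _⟩
    · intro j _; rfl
  rw [Finset.sum_congr rfl (fun i _ => hTs i), hsum, hTq,
    Finset.sum_range_succ (fun k => t ^ k) (m+1)]
  ring

end DD

private lemma prod_comp_swapzero {m : ℕ} (p : Fin (m+1)) (f : Fin (m+1) → K) :
    ∏ j : Fin m, f (Equiv.swap 0 p j.succ) = ∏ j ∈ univ.erase p, f j := by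
  refine Finset.prod_nbij (fun j => Equiv.swap 0 p j.succ) ?_ ?_ ?_ ?_
  · intro j _
    refine Finset.mem_erase.mpr ⟨?_, mem_univ _⟩
    intro h
    exact Fin.succ_ne_zero j
      ((Equiv.swap 0 p).injective (h.trans (Equiv.swap_apply_left 0 p).symm))
  · intro j _ k _ h
    exact Fin.succ_injective _ ((Equiv.swap 0 p).injective h)
  · intro z hz
    rw [Finset.mem_coe, Finset.mem_erase] at hz
    have hz0 : Equiv.swap 0 p z ≠ 0 := by
      intro h
      have := congrArg (Equiv.swap 0 p) h
      rw [Equiv.swap_apply_self, Equiv.swap_apply_left] at this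
      exact hz.1 this
    refine ⟨(Equiv.swap 0 p z).pred hz0, Finset.mem_coe.mpr (mem_univ _), ?_⟩
    show (Equiv.swap 0 p) (((Equiv.swap 0 p) z).pred hz0).succ = z
    rw [Fin.succ_pred, Equiv.swap_apply_self]
  · intro j _; rfl

private lemma L1 {n : ℕ} (t : K) (ht : t ≠ 1) (x : Fin n → K) (hx : Function.Injective x) :
    ∑ σ : Equiv.Perm (Fin n), ∏ i, ∏ j ∈ Ioi i, (x (σ i) - t * x (σ j)) / (x (σ i) - x (σ j))
      = (∏ i ∈ range n, (1 - t ^ (i+1))) / (1 - t) ^ n := by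
  induction n with
  | zero => simp
  | succ m ih =>
    have h1t : (1:K) - t ≠ 0 := fun h => ht (by linear_combination -h)
    rw [← Equiv.sum_comp (Equiv.Perm.decomposeFin.symm)
      (fun σ => ∏ i, ∏ j ∈ Ioi i, (x (σ i) - t * x (σ j)) / (x (σ i) - x (σ j))),
      Fintype.sum_prod_type]
    have hterm : ∀ (p : Fin (m+1)) (σ : Equiv.Perm (Fin m)),
        (∏ i, ∏ j ∈ Ioi i,
          (x (Equiv.Perm.decomposeFin.symm (p, σ) i) - t * x (Equiv.Perm.decomposeFin.symm (p, σ) j))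
            / (x (Equiv.Perm.decomposeFin.symm (p, σ) i) - x (Equiv.Perm.decomposeFin.symm (p, σ) j)))
        = (∏ j ∈ univ.erase p, (x p - t * x j) / (x p - x j)) *
          ∏ i, ∏ j ∈ Ioi i,
            (x (Equiv.swap 0 p (σ i).succ) - t * x (Equiv.swap 0 p (σ j).succ))
              / (x (Equiv.swap 0 p (σ i).succ) - x (Equiv.swap 0 p (σ j).succ)) := by
      intro p σ
      rw [Fin.prod_univ_succ]
      congr 1
      · rw [Fin.Ioi_zero_eq_map, Finset.prod_map]
        simp only [Fin.succEmb, Function.Embedding.coeFn_mk,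
          Equiv.Perm.decomposeFin_symm_apply_zero, Equiv.Perm.decomposeFin_symm_apply_succ]
        rw [← prod_comp_swapzero p (fun j => (x p - t * x j) / (x p - x j))]
        exact Equiv.prod_comp σ (fun j => (x p - t * x (Equiv.swap 0 p j.succ))
          / (x p - x (Equiv.swap 0 p j.succ)))
      · refine Finset.prod_congr rfl fun i _ => ?_
        rw [Fin.Ioi_succ, Finset.prod_map]
        refine Finset.prod_congr rfl fun j _ => ?_
        simp only [Fin.succEmb, Function.Embedding.coeFn_mk,
          Equiv.Perm.decomposeFin_symm_apply_succ]
    rw [Finset.sum_congr rfl (fun p _ => Finset.sum_congr rfl (fun σ _ => hterm p σ))]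
    have hyinj : ∀ p : Fin (m+1),
        Function.Injective (fun j : Fin m => x (Equiv.swap 0 p j.succ)) := by
      intro p a b h
      exact Fin.succ_injective _ ((Equiv.swap 0 p).injective (hx h))
    have hstep : ∀ p : Fin (m+1),
        (∑ σ : Equiv.Perm (Fin m), (∏ j ∈ univ.erase p, (x p - t * x j) / (x p - x j)) *
          ∏ i, ∏ j ∈ Ioi i,
            (x (Equiv.swap 0 p (σ i).succ) - t * x (Equiv.swap 0 p (σ j).succ))
              / (x (Equiv.swap 0 p (σ i).succ) - x (Equiv.swap 0 p (σ j).succ)))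
        = (∏ j ∈ univ.erase p, (x p - t * x j) / (x p - x j)) *
            ((∏ i ∈ range m, (1 - t ^ (i+1))) / (1 - t) ^ m) := by
      intro p
      rw [← Finset.mul_sum]
      congr 1
      exact ih (fun j => x (Equiv.swap 0 p j.succ)) (hyinj p)
    rw [Finset.sum_congr rfl (fun p _ => hstep p), ← Finset.sum_mul, lemD t ht x hx]
    have hg : (∑ k ∈ range (m+1), t ^ k) * (1 - t) = 1 - t ^ (m+1) := by
      linear_combination -(geom_sum_mul t (m+1))
    rw [Finset.prod_range_succ,
      show ((1:K)-t)^(m+1) = (1-t)^m * (1-t) from pow_succ _ _,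
      eq_div_iff (mul_ne_zero (pow_ne_zero _ h1t) h1t)]
    have hc : (∏ i ∈ range m, (1 - t^(i+1))) / (1-t)^m * (1-t)^m
        = ∏ i ∈ range m, (1 - t^(i+1)) := div_mul_cancel₀ _ (pow_ne_zero _ h1t)
    linear_combination (∑ k ∈ range (m+1), t^k) * (1-t) * hc
      + (∏ i ∈ range m, (1 - t^(i+1))) * hg

end DSIproof

/-- Lemma 3.13: a symmetrization identity in two sets of variables. -/
theorem double_symmetrization_identity {K : Type*} [Field K] {n : ℕ} (hn : 0 < n)
    (t : K) (ht : t ≠ 1)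
    (u v : Fin n → K)
    (hu : Function.Injective u) (hv : Function.Injective v)
    (huv : ∀ i j : Fin n, u i ≠ t * v j) :
    (∑ σ : Equiv.Perm (Fin n), ∑ τ : Equiv.Perm (Fin n),
      (∏ i : Fin n, 1 / (u (σ i) - t * v (τ i))) *
        ∏ i : Fin n, ∏ j ∈ Finset.Ioi i,
          ((u (σ i) - t * u (σ j)) / (u (σ i) - u (σ j))) *
          ((u (σ i) - v (τ j)) / (u (σ i) - t * v (τ j))) *
          ((v (τ i) - t * v (τ j)) / (v (τ i) - v (τ j))))
    = (∏ i ∈ Finset.range n, (1 - t ^ (i + 1))) / (1 - t) ^ n *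
        ∑ τ : Equiv.Perm (Fin n),
          (∏ i : Fin n, 1 / (u i - t * v (τ i))) *
            ∏ i : Fin n, ∏ j ∈ Finset.Ioi i,
              ((u i - v (τ j)) / (u i - t * v (τ j))) *
              ((v (τ i) - t * v (τ j)) / (v (τ i) - v (τ j))) := by
  obtain ⟨m, rfl⟩ : ∃ m, n = m + 1 := ⟨n - 1, (Nat.succ_pred_eq_of_pos hn).symm⟩
  have hne : ∀ i j, u i - t * v j ≠ 0 := fun i j => sub_ne_zero.mpr (huv i j)
  -- rewrite each (σ,τ) summand
  have hsummand : ∀ σ τ : Equiv.Perm (Fin (m+1)),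
      (∏ i : Fin (m+1), 1 / (u (σ i) - t * v (τ i))) *
        ∏ i : Fin (m+1), ∏ j ∈ Finset.Ioi i,
          ((u (σ i) - t * u (σ j)) / (u (σ i) - u (σ j))) *
          ((u (σ i) - v (τ j)) / (u (σ i) - t * v (τ j))) *
          ((v (τ i) - t * v (τ j)) / (v (τ i) - v (τ j)))
      = (∏ i : Fin (m+1), ∏ j ∈ Finset.Ioi i,
            (u (σ i) - t * u (σ j)) / (u (σ i) - u (σ j)))
          * Phat t (u ∘ σ) (v ∘ τ) := by
    intro σ τ
    rw [Phat]
    simp only [Function.comp_apply]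
    have h1 : ∀ i ∈ (univ : Finset (Fin (m+1))),
        (∏ j ∈ Finset.Ioi i,
          ((u (σ i) - t * u (σ j)) / (u (σ i) - u (σ j))) *
          ((u (σ i) - v (τ j)) / (u (σ i) - t * v (τ j))) *
          ((v (τ i) - t * v (τ j)) / (v (τ i) - v (τ j))))
        = (∏ j ∈ Finset.Ioi i, (u (σ i) - t * u (σ j)) / (u (σ i) - u (σ j)))
          * ∏ j ∈ Finset.Ioi i, ((u (σ i) - v (τ j)) / (u (σ i) - t * v (τ j))
              * ((v (τ i) - t * v (τ j)) / (v (τ i) - v (τ j)))) := by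
      intro i _
      rw [← Finset.prod_mul_distrib]
      exact Finset.prod_congr rfl fun j _ => by ring
    rw [Finset.prod_congr rfl h1, Finset.prod_mul_distrib]
    ring
  rw [Finset.sum_congr rfl (fun σ _ => Finset.sum_congr rfl (fun τ _ => hsummand σ τ))]
  have hstep : ∀ σ : Equiv.Perm (Fin (m+1)),
      (∑ τ : Equiv.Perm (Fin (m+1)),
        (∏ i : Fin (m+1), ∏ j ∈ Finset.Ioi i,
            (u (σ i) - t * u (σ j)) / (u (σ i) - u (σ j)))
          * Phat t (u ∘ σ) (v ∘ τ))
      = (∏ i : Fin (m+1), ∏ j ∈ Finset.Ioi i,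
            (u (σ i) - t * u (σ j)) / (u (σ i) - u (σ j)))
          * ∑ τ : Equiv.Perm (Fin (m+1)), Phat t u (v ∘ τ) := by
    intro σ
    rw [← Finset.mul_sum, H_perm t u v hv hne σ]
  rw [Finset.sum_congr rfl (fun σ _ => hstep σ), ← Finset.sum_mul, L1 t ht u hu]
  congr 1
end

section
/- Let K be a field, let n be a positive integer, let t ∈ K, let x = (x_1, …, x_n) ∈ K^n have pairwise distinct entries, let y = (y_1, …, y_n) ∈ K^n have pairwise distinct entries, and assume x_i·y_j ≠ 1 and t·x_i·y_j ≠ 1 for all 1 ≤ i, j ≤ n. Then F(t; x, y; t) = det_{1 ≤ i,j ≤ n}( 1/((1 − x_i·y_j)(1 − t·x_i·y_j)) ) · (1 − t)^n · ∏_{i=1}^{n} ∏_{j=1}^{n} (1 − x_i·y_j) / [ ∏_{1 ≤ i < j ≤ n} (x_i − x_j)(y_i − y_j) ]. -/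
open Finset

lemma cauchy_det {K : Type*} [Field K] : ∀ {n : ℕ} (x y : Fin n → K),
    (∀ i j, 1 - x i * y j ≠ 0) →
    Matrix.det (Matrix.of fun i j => 1 / (1 - x i * y j)) =
      (∏ i : Fin n, ∏ j ∈ Ioi i, (x j - x i) * (y j - y i)) /
        ∏ i : Fin n, ∏ j : Fin n, (1 - x i * y j) := by
  intro n
  induction n with
  | zero =>
      intro x y h
      simp [Matrix.det_fin_zero]
  | succ n ih =>
      intro x y h
      -- Step 1: subtract row 0 from the other rows
      have step1 :
          Matrix.det (Matrix.of fun i j : Fin (n+1) => 1 / (1 - x i * y j)) =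
          Matrix.det (Matrix.of fun i j : Fin (n+1) =>
            Fin.cases (1 / (1 - x 0 * y j))
              (fun i' => 1 / (1 - x i'.succ * y j) - 1 / (1 - x 0 * y j)) i) := by
        apply Matrix.det_eq_of_forall_row_eq_smul_add_const
          (c := Fin.cases 0 (fun _ => 1)) (k := 0) (by simp)
        intro i j
        refine Fin.cases ?_ (fun i' => ?_) i <;> simp
      -- the matrix after factoring out of rows and columns
      set B : Matrix (Fin (n+1)) (Fin (n+1)) K :=
        Matrix.of fun i j => Fin.cases (1 : K) (fun i' => y j / (1 - x i'.succ * y j)) i with hB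
      have e1 :
          (Matrix.of fun i j : Fin (n+1) =>
            Fin.cases (1 / (1 - x 0 * y j))
              (fun i' => 1 / (1 - x i'.succ * y j) - 1 / (1 - x 0 * y j)) i) =
          Matrix.of fun i j : Fin (n+1) => (1 - x 0 * y j)⁻¹ *
            ((Matrix.of fun i j : Fin (n+1) =>
                (Fin.cases (1 : K) (fun i' => x i'.succ - x 0) i) * B i j) i j) := by
        ext i j
        refine Fin.cases ?_ (fun i' => ?_) i
        · simp [hB, one_div]
        · have h1 := h i'.succ j
          have h2 := h 0 j
          simp only [Matrix.of_apply, Fin.cases_succ, hB]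
          field_simp
          linear_combination -(mul_inv_cancel₀ h2)
      have step2 :
          Matrix.det (Matrix.of fun i j : Fin (n+1) =>
            Fin.cases (1 / (1 - x 0 * y j))
              (fun i' => 1 / (1 - x i'.succ * y j) - 1 / (1 - x 0 * y j)) i) =
          (∏ j : Fin (n+1), (1 - x 0 * y j)⁻¹) *
            ((∏ i : Fin n, (x i.succ - x 0)) * Matrix.det B) := by
        rw [e1, Matrix.det_mul_row, Matrix.det_mul_column]
        congr 1
        rw [Fin.prod_univ_succ]
        simp
      -- Step 3: subtract column 0 from the other columns (via transpose)
      set D : Matrix (Fin (n+1)) (Fin (n+1)) K :=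
        Matrix.of fun i j => Fin.cases (B i 0) (fun j' => B i j'.succ - B i 0) j with hD
      have step3 : Matrix.det B = Matrix.det D := by
        rw [← Matrix.det_transpose B, ← Matrix.det_transpose D]
        apply Matrix.det_eq_of_forall_row_eq_smul_add_const
          (c := Fin.cases 0 (fun _ => 1)) (k := 0) (by simp)
        intro j i
        refine Fin.cases ?_ (fun j' => ?_) j <;> simp [hD]
      -- Step 4: expand along row 0
      have step4 : Matrix.det D =
          Matrix.det (D.submatrix Fin.succ Fin.succ) := by
        rw [Matrix.det_succ_row_zero, Fin.sum_univ_succ]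
        have hD00 : D 0 0 = 1 := by simp [hD, hB]
        have hD0succ : ∀ j : Fin n, D 0 j.succ = 0 := by
          intro j; simp [hD, hB]
        simp [hD00, hD0succ, Fin.succAbove_zero]
      have e2 : D.submatrix Fin.succ Fin.succ =
          Matrix.of fun i j : Fin n => (y j.succ - y 0) *
            ((Matrix.of fun i j : Fin n => (1 - x i.succ * y 0)⁻¹ *
              ((Matrix.of fun i j : Fin n => 1 / (1 - x i.succ * y j.succ)) i j)) i j) := by
        ext i j
        have h1 := h i.succ j.succ
        have h2 := h i.succ 0
        simp only [Matrix.submatrix_apply, hD, hB, Matrix.of_apply, Fin.cases_succ]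
        field_simp
        linear_combination y 0 * mul_inv_cancel₀ h1
      have step5 : Matrix.det (D.submatrix Fin.succ Fin.succ) =
          (∏ j : Fin n, (y j.succ - y 0)) * ((∏ i : Fin n, (1 - x i.succ * y 0)⁻¹) *
            ((∏ i : Fin n, ∏ j ∈ Ioi i, (x j.succ - x i.succ) * (y j.succ - y i.succ)) /
              ∏ i : Fin n, ∏ j : Fin n, (1 - x i.succ * y j.succ))) := by
        rw [e2, Matrix.det_mul_row, Matrix.det_mul_column,
          ih (fun i => x i.succ) (fun j => y j.succ) (fun i j => h i.succ j.succ)]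
      rw [step1, step2, step3, step4, step5]
      -- final algebra
      have hy0 : ∀ j, (1 - x 0 * y j) ≠ 0 := fun j => h 0 j
      have hx0 : ∀ i : Fin n, (1 - x i.succ * y 0) ≠ 0 := fun i => h i.succ 0
      have hP1 : (∏ j : Fin (n+1), (1 - x 0 * y j)) ≠ 0 := prod_ne_zero_iff.mpr fun j _ => hy0 j
      have hP2 : (∏ i : Fin n, (1 - x i.succ * y 0)) ≠ 0 := prod_ne_zero_iff.mpr fun i _ => hx0 i
      have hP3 : (∏ i : Fin n, ∏ j : Fin n, (1 - x i.succ * y j.succ)) ≠ 0 :=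
        prod_ne_zero_iff.mpr fun i _ => prod_ne_zero_iff.mpr fun j _ => h i.succ j.succ
      rw [prod_inv_distrib, prod_inv_distrib,
        Fin.prod_univ_succ (f := fun i : Fin (n+1) => ∏ j ∈ Ioi i, (x j - x i) * (y j - y i)),
        Fin.prod_Ioi_zero,
        Fin.prod_univ_succ (f := fun i : Fin (n+1) => ∏ j : Fin (n+1), (1 - x i * y j))]
      simp_rw [Fin.prod_Ioi_succ]
      have hsplit : (∏ i : Fin n, ∏ j : Fin (n+1), (1 - x i.succ * y j))
          = ∏ i : Fin n, ((1 - x i.succ * y 0) * ∏ j : Fin n, (1 - x i.succ * y j.succ)) :=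
        Finset.prod_congr rfl fun i _ => Fin.prod_univ_succ _
      rw [hsplit, prod_mul_distrib, prod_mul_distrib]
      field_simp

open Finset

lemma sum_card_filter_lt {α : Type*} [LinearOrder α] (I : Finset α) :
    ∑ i ∈ I, (I.filter (fun j => i < j)).card = I.card.choose 2 := by
  classical
  induction I using Finset.strongInduction with
  | _ I ih =>
    rcases I.eq_empty_or_nonempty with rfl | hne
    · simp
    · set m := I.max' hne with hm
      have hmI : m ∈ I := I.max'_mem hne
      have hlt : ∀ i ∈ I.erase m, i < m := fun i hi =>
        lt_of_le_of_ne (I.le_max' i (mem_of_mem_erase hi)) (ne_of_mem_erase hi)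
      have hfm : I.filter (fun j => m < j) = ∅ := by
        apply filter_eq_empty_iff.mpr
        intro j hj
        exact not_lt.mpr (I.le_max' j hj)
      have hkey : ∀ i ∈ I.erase m,
          (I.filter (fun j => i < j)).card
            = ((I.erase m).filter (fun j => i < j)).card + 1 := by
        intro i hi
        have : I.filter (fun j => i < j)
            = insert m ((I.erase m).filter (fun j => i < j)) := by
          ext j
          simp only [mem_filter, mem_insert, mem_erase]
          constructor
          · rintro ⟨hjI, hij⟩
            rcases eq_or_ne j m with rfl | hjm
            · exact Or.inl rfl
            · exact Or.inr ⟨⟨hjm, hjI⟩, hij⟩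
          · rintro (rfl | ⟨⟨hjm, hjI⟩, hij⟩)
            · exact ⟨hmI, hlt i hi⟩
            · exact ⟨hjI, hij⟩
        rw [this, card_insert_of_notMem (by simp)]
      have hsum : ∑ i ∈ I, (I.filter (fun j => i < j)).card
          = (∑ i ∈ I.erase m, ((I.erase m).filter (fun j => i < j)).card)
              + (I.erase m).card := by
        rw [← Finset.sum_erase_add _ _ hmI, hfm]
        simp only [card_empty, add_zero]
        rw [Finset.sum_congr rfl hkey, Finset.sum_add_distrib, Finset.sum_const, smul_eq_mul,
          mul_one]
      rw [hsum, ih (I.erase m) (erase_ssubset hmI)]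
      have hc : I.card = (I.erase m).card + 1 := by
        rw [card_erase_of_mem hmI]
        exact (Nat.succ_pred_eq_of_pos (card_pos.mpr hne)).symm
      rw [hc, Nat.choose_succ_succ, Nat.choose_one_right, Nat.add_comm]

/-- Splitting a product over ordered pairs according to membership in `I`,
for a symmetric function `G`. -/
lemma prod_Ioi_split {K : Type*} [CommMonoid K] {n : ℕ} (G : Fin n → Fin n → K)
    (hG : ∀ i j, i ≠ j → G i j = G j i) (I : Finset (Fin n)) :
    (∏ i : Fin n, ∏ j ∈ Ioi i, G i j)
      = (∏ i ∈ I, ∏ j ∈ I.filter (fun j => i < j), G i j) *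
        (∏ i ∈ Iᶜ, ∏ j ∈ Iᶜ.filter (fun j => i < j), G i j) *
        (∏ i ∈ I, ∏ j ∈ Iᶜ, G i j) := by
  classical
  have inner : ∀ i : Fin n, (∏ j ∈ Ioi i, G i j)
      = (∏ j ∈ (if i ∈ I then I else Iᶜ).filter (fun j => i < j), G i j) *
        (∏ j ∈ (if i ∈ I then Iᶜ else I).filter (fun j => i < j), G i j) := by
    intro i
    rw [← prod_union (Finset.disjoint_filter_filter
      (by split <;> [exact disjoint_compl_right; exact disjoint_compl_left]))]
    apply Finset.prod_congr _ fun _ _ => rfl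
    ext j
    by_cases hiI : i ∈ I <;> simp [hiI, mem_Ioi, mem_filter] <;> tauto
  calc (∏ i : Fin n, ∏ j ∈ Ioi i, G i j)
      = ∏ i : Fin n, ((∏ j ∈ (if i ∈ I then I else Iᶜ).filter (fun j => i < j), G i j) *
          (∏ j ∈ (if i ∈ I then Iᶜ else I).filter (fun j => i < j), G i j)) :=
        Finset.prod_congr rfl fun i _ => inner i
    _ = ((∏ i ∈ I, ∏ j ∈ I.filter (fun j => i < j), G i j) *
          (∏ i ∈ I, ∏ j ∈ Iᶜ.filter (fun j => i < j), G i j)) *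
        ((∏ i ∈ Iᶜ, ∏ j ∈ Iᶜ.filter (fun j => i < j), G i j) *
          (∏ i ∈ Iᶜ, ∏ j ∈ I.filter (fun j => i < j), G i j)) := by
        rw [← Finset.prod_mul_prod_compl I, ← prod_mul_distrib, ← prod_mul_distrib]
        congr 1 <;> apply Finset.prod_congr rfl <;> intro i hi
        · rw [if_pos hi, if_pos hi]
        · rw [if_neg (by simpa using hi), if_neg (by simpa using hi)]
    _ = _ := by
        have hmix : (∏ i ∈ I, ∏ j ∈ Iᶜ.filter (fun j => i < j), G i j) *
            (∏ i ∈ Iᶜ, ∏ j ∈ I.filter (fun j => i < j), G i j)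
            = ∏ i ∈ I, ∏ j ∈ Iᶜ, G i j := by
          have h2 : (∏ i ∈ Iᶜ, ∏ j ∈ I.filter (fun j => i < j), G i j)
              = ∏ i ∈ I, ∏ j ∈ Iᶜ.filter (fun j => j < i), G i j := by
            simp_rw [Finset.prod_filter]
            rw [Finset.prod_comm]
            refine Finset.prod_congr rfl fun i hi => Finset.prod_congr rfl fun j hj => ?_
            have hij : j ≠ i := fun h => (by simpa using hj : j ∉ I) (h ▸ hi)
            split_ifs with hlt
            · exact hG j i hij
            · rfl
          rw [h2, ← prod_mul_distrib]
          refine Finset.prod_congr rfl fun i hi => ?_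
          rw [← Finset.prod_union (Finset.disjoint_left.mpr (fun j hj hj' =>
            absurd ((mem_filter.mp hj).2.trans (mem_filter.mp hj').2) (lt_irrefl i)))]
          apply Finset.prod_congr _ fun _ _ => rfl
          ext j
          simp only [mem_union, mem_filter]
          constructor
          · rintro (⟨h, _⟩ | ⟨h, _⟩) <;> exact h
          · intro hj
            have hij : i ≠ j := fun h => (by simpa using hj : j ∉ I) (h ▸ hi)
            rcases lt_or_gt_of_ne hij with h | h
            · exact Or.inl ⟨hj, h⟩
            · exact Or.inr ⟨hj, h⟩
        rw [← hmix]
        exact mul_mul_mul_comm _ _ _ _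

/-- Lemma 3.10: `F(t;x,y;t)` equals the Izergin--Korepin determinant. -/
theorem bisymF_izergin_korepin {K : Type*} [Field K] {n : ℕ} (hn : 0 < n) (t : K)
    (x y : Fin n → K)
    (hx : Function.Injective x) (hy : Function.Injective y)
    (h1 : ∀ i j : Fin n, x i * y j ≠ 1)
    (h2 : ∀ i j : Fin n, t * x i * y j ≠ 1) :
    bisymF t t x y =
      Matrix.det (Matrix.of fun i j : Fin n =>
          1 / ((1 - x i * y j) * (1 - t * x i * y j))) *
        ((1 - t) ^ n * ∏ i : Fin n, ∏ j : Fin n, (1 - x i * y j)) /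
        ∏ i : Fin n, ∏ j ∈ Finset.Ioi i, (x i - x j) * (y i - y j) := by
  classical
  have hxy : ∀ i j, (1 : K) - x i * y j ≠ 0 := fun i j => sub_ne_zero.mpr (Ne.symm (h1 i j))
  have htxy : ∀ i j, (1 : K) - t * x i * y j ≠ 0 := fun i j => sub_ne_zero.mpr (Ne.symm (h2 i j))
  rcases eq_or_ne t 1 with rfl | ht1
  · -- degenerate case t = 1
    have hL : bisymF (1 : K) 1 x y = ∑ I : Finset (Fin n), (-1 : K) ^ I.card := by
      unfold bisymF
      refine Finset.sum_congr rfl fun I _ => ?_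
      have e1 : (∏ i ∈ I, ∏ j ∈ Iᶜ, ((1 : K) * x i - x j) / (x i - x j)) = 1 := by
        refine Finset.prod_eq_one fun i hi => Finset.prod_eq_one fun j hj => ?_
        rw [one_mul]
        exact div_self (sub_ne_zero.mpr (fun h => (Finset.mem_compl.mp hj)
          (hx h ▸ hi)))
      have e2 : (∏ i ∈ I, ∏ j, (1 - x i * y j) / (1 - (1 : K) * x i * y j)) = 1 := by
        refine Finset.prod_eq_one fun i hi => Finset.prod_eq_one fun j _ => ?_
        rw [one_mul]
        exact div_self (hxy i j)
      rw [e1, e2, one_pow, mul_one, mul_one, mul_one]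
    have : Nonempty (Fin n) := ⟨⟨0, hn⟩⟩
    have h0 : (∑ I ∈ (Finset.univ : Finset (Finset (Fin n))), (-1 : K) ^ I.card) = 0 := by
      have hz := Finset.sum_powerset_neg_one_pow_card_of_nonempty
        (x := (Finset.univ : Finset (Fin n))) Finset.univ_nonempty
      calc (∑ I ∈ (Finset.univ : Finset (Finset (Fin n))), (-1 : K) ^ I.card)
          = ((∑ I ∈ (Finset.univ : Finset (Fin n)).powerset, (-1 : ℤ) ^ I.card : ℤ) : K) := by
            rw [Finset.powerset_univ]; push_cast; rfl
        _ = 0 := by rw [hz]; exact Int.cast_zero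
    rw [hL, h0, sub_self, zero_pow hn.ne', zero_mul, mul_zero, zero_div]
  · -- main case t ≠ 1
    have ht : (1 : K) - t ≠ 0 := sub_ne_zero.mpr (Ne.symm ht1)
    set s : Matrix (Fin n) (Fin n) K :=
      Matrix.of fun i j => (1 - t)⁻¹ * (-t) * (1 / (1 - t * x i * y j)) with hs
    set r : Matrix (Fin n) (Fin n) K :=
      Matrix.of fun i j => (1 - t)⁻¹ * (1 / (1 - x i * y j)) with hr
    have hA : (Matrix.of fun i j : Fin n =>
        1 / ((1 - x i * y j) * (1 - t * x i * y j))) = s + r := by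
      ext i j
      have ha := hxy i j
      have hb := htxy i j
      simp only [Matrix.of_apply, Matrix.add_apply, hs, hr]
      field_simp
      linear_combination mul_inv_cancel₀ hb
    have hdet : Matrix.det (s + r) =
        ∑ I : Finset (Fin n), Matrix.det (I.piecewise s r) :=
      (Matrix.detRowAlternating (n := Fin n) (R := K)).toMultilinearMap.map_add_univ s r
    -- the Cauchy evaluation of each summand
    set x' : Finset (Fin n) → Fin n → K := fun I i => if i ∈ I then t * x i else x i with hx'
    have hx'y : ∀ (I : Finset (Fin n)) i j, (1 : K) - x' I i * y j ≠ 0 := by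
      intro I i j
      simp only [hx']
      split
      · exact htxy i j
      · exact hxy i j
    have hpiece : ∀ I : Finset (Fin n), Matrix.det (I.piecewise s r) =
        (1 - t)⁻¹ ^ n * ((-t) ^ I.card *
          ((∏ i : Fin n, ∏ j ∈ Finset.Ioi i, (x' I j - x' I i) * (y j - y i)) /
            ∏ i : Fin n, ∏ j : Fin n, (1 - x' I i * y j))) := by
      intro I
      have e : (I.piecewise s r : Matrix (Fin n) (Fin n) K) =
          Matrix.of fun i j => (if i ∈ I then (1 - t)⁻¹ * (-t) else (1 - t)⁻¹) *
            ((Matrix.of fun i j => 1 / (1 - x' I i * y j)) i j) := by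
        ext i j
        by_cases h : i ∈ I <;>
          simp [Finset.piecewise, h, hs, hr, hx']
      have hk : I.card ≤ n := by simpa using Finset.card_le_univ I
      have hc : (∏ i : Fin n, (if i ∈ I then (1 - t)⁻¹ * (-t) else (1 - t)⁻¹))
          = (1 - t)⁻¹ ^ n * (-t) ^ I.card := by
        rw [← Finset.prod_mul_prod_compl I,
          Finset.prod_congr rfl (fun i hi => if_pos hi),
          Finset.prod_congr rfl (fun i (hi : i ∈ Iᶜ) => if_neg (Finset.mem_compl.mp hi)),
          Finset.prod_const, Finset.prod_const, Finset.card_compl, Fintype.card_fin,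
          mul_pow, mul_right_comm, ← pow_add, Nat.add_sub_cancel' hk]
      rw [e, Matrix.det_mul_column, cauchy_det (x' I) y (hx'y I), hc, mul_assoc]
      -- global nonzero facts
    have hPne : (∏ i : Fin n, ∏ j : Fin n, (1 - x i * y j)) ≠ 0 :=
      Finset.prod_ne_zero_iff.mpr fun i _ =>
        Finset.prod_ne_zero_iff.mpr fun j _ => hxy i j
    have hDne : (∏ i : Fin n, ∏ j ∈ Finset.Ioi i, (x i - x j) * (y i - y j)) ≠ 0 := by
      refine Finset.prod_ne_zero_iff.mpr fun i _ =>
        Finset.prod_ne_zero_iff.mpr fun j hj => mul_ne_zero ?_ ?_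
      · exact sub_ne_zero.mpr fun h => absurd (hx h) (Finset.mem_Ioi.mp hj).ne
      · exact sub_ne_zero.mpr fun h => absurd (hy h) (Finset.mem_Ioi.mp hj).ne
    have hQne : ∀ I : Finset (Fin n),
        (∏ i : Fin n, ∏ j : Fin n, (1 - x' I i * y j)) ≠ 0 := fun I =>
      Finset.prod_ne_zero_iff.mpr fun i _ =>
        Finset.prod_ne_zero_iff.mpr fun j _ => hx'y I i j
    rw [hA, hdet, Finset.sum_congr rfl (fun I _ => hpiece I), Finset.sum_mul,
      Finset.sum_div]
    unfold bisymF
    refine Finset.sum_congr rfl fun I _ => ?_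
    -- identity (1): the Cauchy fraction
    have hQsplit : (∏ i : Fin n, ∏ j : Fin n, (1 - x' I i * y j))
        = (∏ i ∈ I, ∏ j : Fin n, (1 - t * x i * y j)) *
          (∏ i ∈ Iᶜ, ∏ j : Fin n, (1 - x i * y j)) := by
      rw [← Finset.prod_mul_prod_compl I]
      congr 1
      · exact Finset.prod_congr rfl fun i hi => Finset.prod_congr rfl fun j _ => by
          simp [hx', hi]
      · exact Finset.prod_congr rfl fun i hi => Finset.prod_congr rfl fun j _ => by
          simp [hx', Finset.mem_compl.mp hi]
    have hPsplit : (∏ i : Fin n, ∏ j : Fin n, (1 - x i * y j))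
        = (∏ i ∈ I, ∏ j : Fin n, (1 - x i * y j)) *
          (∏ i ∈ Iᶜ, ∏ j : Fin n, (1 - x i * y j)) :=
      (Finset.prod_mul_prod_compl I _).symm
    have ID1 : (∏ i ∈ I, ∏ j, (1 - x i * y j) / (1 - t * x i * y j))
        = (∏ i : Fin n, ∏ j : Fin n, (1 - x i * y j)) /
          (∏ i : Fin n, ∏ j : Fin n, (1 - x' I i * y j)) := by
      have hfrac : (∏ i ∈ I, ∏ j, (1 - x i * y j) / (1 - t * x i * y j))
          = (∏ i ∈ I, ∏ j : Fin n, (1 - x i * y j)) /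
            (∏ i ∈ I, ∏ j : Fin n, (1 - t * x i * y j)) := by
        simp_rw [Finset.prod_div_distrib]
      have hIt : (∏ i ∈ I, ∏ j : Fin n, (1 - t * x i * y j)) ≠ 0 :=
        Finset.prod_ne_zero_iff.mpr fun i _ =>
          Finset.prod_ne_zero_iff.mpr fun j _ => htxy i j
      have hCc : (∏ i ∈ Iᶜ, ∏ j : Fin n, (1 - x i * y j)) ≠ 0 :=
        Finset.prod_ne_zero_iff.mpr fun i _ =>
          Finset.prod_ne_zero_iff.mpr fun j _ => hxy i j
      rw [hfrac, hPsplit, hQsplit, div_eq_div_iff hIt (mul_ne_zero hIt hCc)]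
      ring
    -- identity (2): the Vandermonde-type fraction
    set G : Fin n → Fin n → K := fun i j => (x' I j - x' I i) / (x j - x i) with hG
    have hGsym : ∀ i j : Fin n, i ≠ j → G i j = G j i := by
      intro i j _
      rw [hG]
      simp only
      rw [← neg_div_neg_eq, neg_sub, neg_sub]
    have hND : (∏ i : Fin n, ∏ j ∈ Finset.Ioi i, (x' I j - x' I i) * (y j - y i)) /
        (∏ i : Fin n, ∏ j ∈ Finset.Ioi i, (x i - x j) * (y i - y j))
        = ∏ i : Fin n, ∏ j ∈ Finset.Ioi i, G i j := by
      have hD2 : (∏ i : Fin n, ∏ j ∈ Finset.Ioi i, (x i - x j) * (y i - y j))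
          = ∏ i : Fin n, ∏ j ∈ Finset.Ioi i, (x j - x i) * (y j - y i) :=
        Finset.prod_congr rfl fun i _ => Finset.prod_congr rfl fun j _ => by ring
      rw [hD2, ← Finset.prod_div_distrib]
      refine Finset.prod_congr rfl fun i _ => ?_
      rw [← Finset.prod_div_distrib]
      refine Finset.prod_congr rfl fun j hj => ?_
      exact mul_div_mul_right _ _
        (sub_ne_zero.mpr fun h => absurd (hy h) (Finset.mem_Ioi.mp hj).ne')
    have hTII : (∏ i ∈ I, ∏ j ∈ I.filter (fun j => i < j), G i j)
        = t ^ (I.card.choose 2) := by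
      rw [← sum_card_filter_lt I, ← Finset.prod_pow_eq_pow_sum]
      refine Finset.prod_congr rfl fun i hi => ?_
      rw [← Finset.prod_const]
      refine Finset.prod_congr rfl fun j hj => ?_
      have hjI := (Finset.mem_filter.mp hj).1
      have hij : i < j := (Finset.mem_filter.mp hj).2
      have hxji : x j - x i ≠ 0 := sub_ne_zero.mpr fun h => absurd (hx h) hij.ne'
      rw [hG]
      simp only [hx', if_pos hi, if_pos hjI]
      rw [← mul_sub, mul_div_assoc, div_self hxji, mul_one]
    have hTCC : (∏ i ∈ Iᶜ, ∏ j ∈ Iᶜ.filter (fun j => i < j), G i j) = 1 := by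
      refine Finset.prod_eq_one fun i hi => Finset.prod_eq_one fun j hj => ?_
      have hij : i < j := (Finset.mem_filter.mp hj).2
      have hxji : x j - x i ≠ 0 := sub_ne_zero.mpr fun h => absurd (hx h) hij.ne'
      rw [hG]
      simp only [hx', if_neg (Finset.mem_compl.mp hi),
        if_neg (Finset.mem_compl.mp ((Finset.mem_filter.mp hj).1))]
      exact div_self hxji
    have hTIC : (∏ i ∈ I, ∏ j ∈ Iᶜ, G i j)
        = ∏ i ∈ I, ∏ j ∈ Iᶜ, (t * x i - x j) / (x i - x j) := by
      refine Finset.prod_congr rfl fun i hi => Finset.prod_congr rfl fun j hj => ?_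
      rw [hG]
      simp only [hx', if_pos hi, if_neg (Finset.mem_compl.mp hj)]
      rw [← neg_div_neg_eq, neg_sub, neg_sub]
    have ID2 : t ^ (I.card.choose 2) * (∏ i ∈ I, ∏ j ∈ Iᶜ, (t * x i - x j) / (x i - x j))
        = (∏ i : Fin n, ∏ j ∈ Finset.Ioi i, (x' I j - x' I i) * (y j - y i)) /
          (∏ i : Fin n, ∏ j ∈ Finset.Ioi i, (x i - x j) * (y i - y j)) := by
      rw [hND, prod_Ioi_split G hGsym I, hTII, hTCC, hTIC, mul_one]
    -- final per-term algebra
    rw [mul_assoc ((-t) ^ I.card), ID2, ID1]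
    have key : ∀ (a N D P Q c : K), c ≠ 0 → D ≠ 0 → Q ≠ 0 →
        a * (N / D) * (P / Q) = c⁻¹ * (a * (N / Q)) * (c * P) / D := by
      intro a N D P Q c hc hD hQ
      field_simp
    rw [inv_pow]
    exact key _ _ _ _ _ _ (pow_ne_zero n ht) hDne (hQne I)
end
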